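/- arXiv:1711.03083 — 6 statements merged into one kernel-verified Lean document; each statement's English description precedes it below -/
import Mathlib

section
/- Let n ≥ 1 and m ∈ ℂ. If f and g are continuous functions on ℝ^n ∖ {0} which are both m-homogeneous (i.e. f(tξ) = t^m f(ξ) and g(tξ) = t^m g(ξ) for all t > 0 and ξ ∈ ℝ^n ∖ {0}), and if f(ℓ) = g(ℓ) for every lattice point ℓ ∈ ℤ^n ∖ {0}, then f = g on all of ℝ^n ∖ {0}. In other words, a continuous homogeneous function on ℝ^n ∖ {0} is completely determined by its restriction to the lattice ℤ^n ∖ {0}. -/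
open scoped BigOperators

/-- The embedding of the lattice `ℤ^n` into `ℝ^n`. -/
def latt {n : ℕ} (ℓ : Fin n → ℤ) : Fin n → ℝ := fun i => (ℓ i : ℝ)

/-!
The points `k⁻¹ • round (k • ξ)` of `k⁻¹ ℤⁿ` approach `ξ` to within `1 / (2k)` in each
coordinate, so the union of the open rays through lattice points is dense in `ℝⁿ`. On such a
ray through `ℓ ≠ 0`, homogeneity gives `f (t • ℓ) = t ^ m * f ℓ = t ^ m * g ℓ = g (t • ℓ)`, and
two functions continuous on the open set `ℝⁿ ∖ {0}` that agree on a dense subset of it coincide.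
-/

open Filter Topology Set

theorem tendsto_inv_mul_round_mul (x : ℝ) :
    Tendsto (fun k : ℕ => (k : ℝ)⁻¹ * round ((k : ℝ) * x)) atTop (𝓝 x) := by
  rw [tendsto_iff_norm_sub_tendsto_zero]
  refine squeeze_zero' (Eventually.of_forall fun _ => norm_nonneg _) ?_
    (by simpa using (tendsto_inv_atTop_nhds_zero_nat (𝕜 := ℝ)).mul_const (1 / 2))
  filter_upwards [eventually_gt_atTop 0] with k hk
  have hk : (k : ℝ) ≠ 0 := Nat.cast_ne_zero.mpr hk.ne'
  calc ‖(k : ℝ)⁻¹ * round ((k : ℝ) * x) - x‖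
      = ‖(k : ℝ)⁻¹ * (round ((k : ℝ) * x) - (k : ℝ) * x)‖ := by congr 1; field_simp
    _ = (k : ℝ)⁻¹ * |(k : ℝ) * x - round ((k : ℝ) * x)| := by
        rw [norm_mul, norm_inv, RCLike.norm_natCast, Real.norm_eq_abs, abs_sub_comm]
    _ ≤ (k : ℝ)⁻¹ * (1 / 2) := by gcongr; exact abs_sub_round _

theorem tendsto_inv_smul_latt_round {n : ℕ} (ξ : Fin n → ℝ) :
    Tendsto (fun k : ℕ => (k : ℝ)⁻¹ • latt fun i => round ((k : ℝ) * ξ i)) atTop (𝓝 ξ) :=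
  tendsto_pi_nhds.mpr fun i => tendsto_inv_mul_round_mul (ξ i)

def latticeRays (n : ℕ) : Set (Fin n → ℝ) :=
  {x | ∃ t : ℝ, 0 < t ∧ ∃ ℓ, t • latt ℓ = x}

theorem dense_latticeRays (n : ℕ) : Dense (latticeRays n) := fun ξ =>
  mem_closure_of_tendsto (tendsto_inv_smul_latt_round ξ) <| by
    filter_upwards [eventually_gt_atTop 0] with k hk
    exact ⟨_, inv_pos.mpr (Nat.cast_pos.mpr hk), _, rfl⟩

theorem eqOn_latticeRays_of_homogeneous {n : ℕ} {m : ℂ} {f g : (Fin n → ℝ) → ℂ}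
    (hfh : ∀ t : ℝ, 0 < t → ∀ ξ : Fin n → ℝ, ξ ≠ 0 → f (t • ξ) = (t : ℂ) ^ m * f ξ)
    (hgh : ∀ t : ℝ, 0 < t → ∀ ξ : Fin n → ℝ, ξ ≠ 0 → g (t • ξ) = (t : ℂ) ^ m * g ξ)
    (hfg : ∀ ℓ : Fin n → ℤ, ℓ ≠ 0 → f (latt ℓ) = g (latt ℓ)) :
    EqOn f g ({x | x ≠ 0} ∩ latticeRays n) := by
  rintro _ ⟨hx, t, ht, ℓ, rfl⟩
  have hlatt : latt ℓ ≠ 0 := right_ne_zero_of_smul hx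
  have hℓ : ℓ ≠ 0 := by
    rintro rfl
    exact hlatt (funext fun _ => Int.cast_zero)
  rw [hfh t ht _ hlatt, hgh t ht _ hlatt, hfg ℓ hℓ]

theorem determined_by_lattice_general (n : ℕ) (m : ℂ)
    (f g : (Fin n → ℝ) → ℂ)
    (hfc : ContinuousOn f {x : Fin n → ℝ | x ≠ 0})
    (hgc : ContinuousOn g {x : Fin n → ℝ | x ≠ 0})
    (hfh : ∀ t : ℝ, 0 < t → ∀ ξ : Fin n → ℝ, ξ ≠ 0 → f (t • ξ) = (t : ℂ) ^ m * f ξ)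
    (hgh : ∀ t : ℝ, 0 < t → ∀ ξ : Fin n → ℝ, ξ ≠ 0 → g (t • ξ) = (t : ℂ) ^ m * g ξ)
    (hfg : ∀ ℓ : Fin n → ℤ, ℓ ≠ 0 → f (latt ℓ) = g (latt ℓ)) :
    ∀ ξ : Fin n → ℝ, ξ ≠ 0 → f ξ = g ξ :=
  (eqOn_latticeRays_of_homogeneous hfh hgh hfg).of_subset_closure hfc hgc inter_subset_left
    ((dense_latticeRays n).open_subset_closure_inter isOpen_ne)

/-- A continuous `m`-homogeneous function on `ℝ^n ∖ {0}` is determined by its values on the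
lattice `ℤ^n ∖ {0}`. Here `t ^ m := exp (m log t)` for `t > 0` and `m ∈ ℂ`. -/
theorem determined_by_lattice (n : ℕ) (hn : 1 ≤ n) (m : ℂ)
    (f g : (Fin n → ℝ) → ℂ)
    (hfc : ContinuousOn f {x : Fin n → ℝ | x ≠ 0})
    (hgc : ContinuousOn g {x : Fin n → ℝ | x ≠ 0})
    (hfh : ∀ t : ℝ, 0 < t → ∀ ξ : Fin n → ℝ, ξ ≠ 0 → f (t • ξ) = (t : ℂ) ^ m * f ξ)
    (hgh : ∀ t : ℝ, 0 < t → ∀ ξ : Fin n → ℝ, ξ ≠ 0 → g (t • ξ) = (t : ℂ) ^ m * g ξ)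
    (hfg : ∀ ℓ : Fin n → ℤ, ℓ ≠ 0 → f (latt ℓ) = g (latt ℓ)) :
    ∀ ξ : Fin n → ℝ, ξ ≠ 0 → f ξ = g ξ :=
  determined_by_lattice_general n m f g hfc hgc hfh hgh hfg
end

section
/- Let n ≥ 1 and let σ : ℤ^n → ℂ satisfy the toroidal symbol estimates of order 0 and be 0-homogeneous on the lattice, i.e. σ(rℓ) = σ(ℓ) for every ℓ ∈ ℤ^n ∖ {0} and every positive integer r. Then there exists а continuous function f : ℝ^n ∖ {0} → ℂ which is 0-homogeneous (f(tξ) = f(ξ) for all t > 0 and ξ ≠ 0) and which satisfies f(ℓ) = σ(ℓ) for all ℓ ∈ ℤ^n ∖ {0}. -/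
open scoped BigOperators

/-- The Japanese bracket `⟨ℓ⟩ = (1 + |ℓ|²)^{1/2}` of a lattice point. -/
noncomputable def jap {n : ℕ} (ℓ : Fin n → ℤ) : ℝ :=
  Real.sqrt (1 + ∑ i, (ℓ i : ℝ) ^ 2)

/-- The difference operator `Δ_j σ (ℓ) = σ(ℓ + e_j) - σ(ℓ)`. -/
def Delta {n : ℕ} (j : Fin n) (σ : (Fin n → ℤ) → ℂ) : (Fin n → ℤ) → ℂ :=
  fun ℓ => σ (ℓ + Pi.single j 1) - σ ℓ

/-- The iterated difference operator `Δ^α = Δ_1^{α_1} ⋯ Δ_n^{α_n}`. -/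
def DeltaPow {n : ℕ} (α : Fin n → ℕ) (σ : (Fin n → ℤ) → ℂ) : (Fin n → ℤ) → ℂ :=
  (List.ofFn (fun j : Fin n => (Delta j)^[α j])).foldr (· ∘ ·) id σ

/-- `σ : ℤ^n → ℂ` satisfies the toroidal symbol estimates of order `s ∈ ℝ`:
`|Δ^α σ(ℓ)| ≤ C_α ⟨ℓ⟩^{s - |α|}`. -/
def ToroidalSymbol {n : ℕ} (s : ℝ) (σ : (Fin n → ℤ) → ℂ) : Prop :=
  ∀ α : Fin n → ℕ, ∃ C > 0, ∀ ℓ : Fin n → ℤ,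
    ‖DeltaPow α σ ℓ‖ ≤ C * jap ℓ ^ (s - ∑ j, (α j : ℝ))

open Filter
open scoped Topology

lemma sum_sq_nonneg {n : ℕ} (ℓ : Fin n → ℤ) : (0:ℝ) ≤ ∑ i, (ℓ i : ℝ) ^ 2 :=
  Finset.sum_nonneg fun i _ => sq_nonneg _

lemma one_le_jap {n : ℕ} (ℓ : Fin n → ℤ) : 1 ≤ jap ℓ := by
  have h := Real.sqrt_le_sqrt (show (1:ℝ) ≤ 1 + ∑ i, (ℓ i : ℝ) ^ 2 by linarith [sum_sq_nonneg ℓ])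
  rwa [Real.sqrt_one] at h

lemma jap_pos {n : ℕ} (ℓ : Fin n → ℤ) : 0 < jap ℓ := lt_of_lt_of_le one_pos (one_le_jap ℓ)

lemma abs_le_jap {n : ℕ} (ℓ : Fin n → ℤ) (j : Fin n) : |(ℓ j : ℝ)| ≤ jap ℓ := by
  rw [jap, ← Real.sqrt_sq_eq_abs]
  refine Real.sqrt_le_sqrt ?_
  have h : (ℓ j : ℝ)^2 ≤ ∑ i, (ℓ i : ℝ)^2 :=
    Finset.single_le_sum (fun i _ => sq_nonneg ((ℓ i : ℝ))) (Finset.mem_univ j)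
  linarith

lemma foldr_ofFn_all_id {β : Type*} : ∀ {m : ℕ} (F : Fin m → β → β), (∀ i, F i = id) →
    (List.ofFn F).foldr (· ∘ ·) id = id := by
  intro m
  induction m with
  | zero => intro F h; simp
  | succ m ih =>
    intro F h
    rw [List.ofFn_succ, List.foldr_cons, ih _ (fun i => h i.succ), h 0]
    rfl

lemma foldr_ofFn_single {β : Type*} : ∀ {m : ℕ} (j : Fin m) (F : Fin m → β → β),
    (∀ i, i ≠ j → F i = id) → (List.ofFn F).foldr (· ∘ ·) id = F j := by
  intro m
  induction m with
  | zero => exact fun j => j.elim0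
  | succ m ih =>
    intro j F h
    rw [List.ofFn_succ, List.foldr_cons]
    rcases Fin.eq_zero_or_eq_succ j with hj | ⟨j', rfl⟩
    · subst hj
      rw [foldr_ofFn_all_id _ (fun i => h i.succ (Fin.succ_ne_zero i))]
      rfl
    · rw [h 0 (Fin.succ_ne_zero j').symm, ih j' _ (fun i hi => h i.succ (by simpa using hi))]
      rfl

lemma DeltaPow_single {n : ℕ} (j : Fin n) (σ : (Fin n → ℤ) → ℂ) :
    DeltaPow (Pi.single j 1) σ = Delta j σ := by
  rw [DeltaPow, foldr_ofFn_single j _ ?_]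
  · rw [Pi.single_eq_same, Function.iterate_one]
  · intro i hi
    rw [Pi.single_eq_of_ne hi, Function.iterate_zero]


lemma step_bound {n : ℕ} (σ : (Fin n → ℤ) → ℂ) (hσ : ToroidalSymbol 0 σ) :
    ∃ C : ℝ, 0 < C ∧ ∀ (j : Fin n) (ℓ : Fin n → ℤ),
      ‖σ (ℓ + Pi.single j 1) - σ ℓ‖ ≤ C / jap ℓ := by
  choose C hC using fun j : Fin n => hσ (Pi.single j 1)
  have hCnn : ∀ j, 0 ≤ C j := fun j => le_of_lt (hC j).1
  refine ⟨1 + ∑ j, C j, by { have := Finset.sum_nonneg (fun i (_ : i ∈ Finset.univ) => hCnn i); linarith }, fun j ℓ => ?_⟩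
  have h1 : ‖σ (ℓ + Pi.single j 1) - σ ℓ‖ ≤ C j * jap ℓ ^ ((0:ℝ) - ∑ i, ((Pi.single j 1 : Fin n → ℕ) i : ℝ)) := by
    have := (hC j).2 ℓ
    rwa [DeltaPow_single] at this
  have hsum : ∑ i, ((Pi.single j 1 : Fin n → ℕ) i : ℝ) = 1 := by
    rw [Finset.sum_eq_single j]
    · simp
    · intro i _ hi; rw [Pi.single_eq_of_ne hi]; simp
    · intro h; exact absurd (Finset.mem_univ j) h
  rw [hsum, show (0:ℝ) - 1 = -1 by norm_num, Real.rpow_neg_one] at h1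
  refine h1.trans ?_
  rw [div_eq_mul_inv]
  have hinv : 0 ≤ (jap ℓ)⁻¹ := inv_nonneg.2 (le_of_lt (jap_pos ℓ))
  have hle : C j ≤ 1 + ∑ i, C i := by
    have := Finset.single_le_sum (fun i (_ : i ∈ Finset.univ) => hCnn i) (Finset.mem_univ j)
    linarith
  exact mul_le_mul_of_nonneg_right hle hinv

lemma path_bound {n : ℕ} (σ : (Fin n → ℤ) → ℂ) (C : ℝ) (hC : 0 ≤ C)
    (hstep : ∀ (j : Fin n) (ℓ : Fin n → ℤ), ‖σ (ℓ + Pi.single j 1) - σ ℓ‖ ≤ C / jap ℓ) :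
    ∀ (S : ℕ) (a b : Fin n → ℤ), (∑ j, (a j - b j).natAbs) = S → ∀ (R : ℝ), 0 < R →
      (∀ p : Fin n → ℤ, (∀ j, (p j - b j).natAbs ≤ (a j - b j).natAbs) → R ≤ jap p) →
      ‖σ a - σ b‖ ≤ C * S / R := by
  intro S
  induction S with
  | zero =>
    intro a b hS R hR _
    have hab : a = b := by
      funext j
      have h0 : (a j - b j).natAbs = 0 :=
        (Finset.sum_eq_zero_iff.mp hS) j (Finset.mem_univ j)
      omega
    rw [hab, sub_self, norm_zero]
    positivity
  | succ S ih =>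
    intro a b hS R hR hbox
    have hex : ∃ j, (a j - b j).natAbs ≠ 0 := by
      by_contra h
      push_neg at h
      rw [Finset.sum_eq_zero (fun j _ => h j)] at hS
      omega
    obtain ⟨j, hj⟩ := hex
    have hd : a j - b j ≠ 0 := fun h => hj (by rw [h]; rfl)
    set ε : ℤ := if 0 < a j - b j then -1 else 1 with hε
    set a' : Fin n → ℤ := a + Pi.single j ε with ha'
    have ha'j : a' j = a j + ε := by simp [ha']
    have ha'i : ∀ i, i ≠ j → a' i = a i := by
      intro i hi; simp [ha', Pi.single_eq_of_ne hi]
    have hdec : (a' j - b j).natAbs + 1 = (a j - b j).natAbs := by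
      rw [ha'j]
      rcases lt_or_gt_of_ne hd with h | h
      · rw [hε, if_neg (by omega)]; omega
      · rw [hε, if_pos (by omega)]; omega
    have hbox' : ∀ i, (a' i - b i).natAbs ≤ (a i - b i).natAbs := by
      intro i
      rcases eq_or_ne i j with rfl | hi
      · omega
      · rw [ha'i i hi]
    have hRa : R ≤ jap a := hbox a (fun i => le_refl _)
    have hRa' : R ≤ jap a' := hbox a' hbox'
    have hstep1 : ‖σ a - σ a'‖ ≤ C / R := by
      rcases lt_or_gt_of_ne hd with h | h
      · have hε1 : ε = 1 := by rw [hε, if_neg (by omega)]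
        have he : a' = a + Pi.single j 1 := by rw [ha', hε1]
        rw [he, norm_sub_rev]
        exact (hstep j a).trans (div_le_div_of_nonneg_left hC hR hRa)
      · have hε1 : ε = -1 := by rw [hε, if_pos (by omega)]
        have he : a = a' + Pi.single j 1 := by
          rw [ha', hε1]
          funext i
          rcases eq_or_ne i j with rfl | hi
          · simp
          · simp [Pi.single_eq_of_ne hi]
        rw [he]
        exact (hstep j a').trans (div_le_div_of_nonneg_left hC hR hRa')
    have hsum' : ∑ i, (a' i - b i).natAbs = S := by
      have h1 : ∑ i, (a i - b i).natAbs
          = (a j - b j).natAbs + ∑ i ∈ Finset.univ.erase j, (a i - b i).natAbs :=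
        (Finset.add_sum_erase _ _ (Finset.mem_univ j)).symm
      have h2 : ∑ i, (a' i - b i).natAbs
          = (a' j - b j).natAbs + ∑ i ∈ Finset.univ.erase j, (a' i - b i).natAbs :=
        (Finset.add_sum_erase _ _ (Finset.mem_univ j)).symm
      have h3 : ∑ i ∈ Finset.univ.erase j, (a' i - b i).natAbs
          = ∑ i ∈ Finset.univ.erase j, (a i - b i).natAbs :=
        Finset.sum_congr rfl (fun i hi => by rw [ha'i i (Finset.ne_of_mem_erase hi)])
      omega
    have hih : ‖σ a' - σ b‖ ≤ C * S / R :=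
      ih a' b hsum' R hR (fun p hp => hbox p (fun i => le_trans (hp i) (hbox' i)))
    calc ‖σ a - σ b‖ ≤ ‖σ a - σ a'‖ + ‖σ a' - σ b‖ := norm_sub_le_norm_sub_add_norm_sub _ _ _
    _ ≤ C / R + C * S / R := add_le_add hstep1 hih
    _ = C * (S + 1) / R := by ring
    _ = C * ((S : ℕ) + 1 : ℕ) / R := by push_cast; ring

lemma compare2 {n : ℕ} (σ : (Fin n → ℤ) → ℂ) (C : ℝ) (hC : 0 ≤ C)
    (hstep : ∀ (j : Fin n) (ℓ : Fin n → ℤ), ‖σ (ℓ + Pi.single j 1) - σ ℓ‖ ≤ C / jap ℓ)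
    (hhom : ∀ ℓ : Fin n → ℤ, ℓ ≠ 0 → ∀ r : ℕ, 0 < r → σ ((r : ℤ) • ℓ) = σ ℓ)
    (a b : Fin n → ℤ) (ha : a ≠ 0) (hb : b ≠ 0) (N M : ℕ) (hN : 0 < N) (hM : 0 < M)
    (js : Fin n) (S : ℝ)
    (hS : (∑ j, |(N : ℝ) * (a j : ℝ) - (M : ℝ) * (b j : ℝ)|) ≤ S)
    (hlt : S < (M : ℝ) * |(b js : ℝ)|) :
    ‖σ a - σ b‖ ≤ C * S / ((M : ℝ) * |(b js : ℝ)| - S) := by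
  set a' : Fin n → ℤ := (N : ℤ) • a with ha'
  set b' : Fin n → ℤ := (M : ℤ) • b with hb'
  set S₀ : ℕ := ∑ j, (a' j - b' j).natAbs with hS₀
  have hterm : ∀ j, ((a' j - b' j).natAbs : ℝ) = |(N : ℝ) * (a j : ℝ) - (M : ℝ) * (b j : ℝ)| := by
    intro j
    have h : a' j - b' j = (N : ℤ) * a j - (M : ℤ) * b j := by simp [ha', hb']
    rw [h, Nat.cast_natAbs]
    push_cast
    ring_nf
  have hcast : (S₀ : ℝ) = ∑ j, |(N : ℝ) * (a j : ℝ) - (M : ℝ) * (b j : ℝ)| := by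
    rw [hS₀]
    push_cast
    exact Finset.sum_congr rfl (fun j _ => hterm j)
  have hS₀S : (S₀ : ℝ) ≤ S := hcast ▸ hS
  set R : ℝ := (M : ℝ) * |(b js : ℝ)| - S with hR
  have hRpos : 0 < R := by rw [hR]; linarith
  have hbox : ∀ p : Fin n → ℤ, (∀ j, (p j - b' j).natAbs ≤ (a' j - b' j).natAbs) → R ≤ jap p := by
    intro p hp
    have h2 : ((p js - b' js).natAbs : ℝ) ≤ S := by
      have h3 : (a' js - b' js).natAbs ≤ S₀ :=
        Finset.single_le_sum (f := fun j => (a' j - b' j).natAbs)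
          (fun j _ => Nat.zero_le _) (Finset.mem_univ js)
      have h4 : (p js - b' js).natAbs ≤ S₀ := le_trans (hp js) h3
      calc ((p js - b' js).natAbs : ℝ) ≤ (S₀ : ℝ) := by exact_mod_cast h4
      _ ≤ S := hS₀S
    have h5 : (|(p js : ℝ)| - |(b' js : ℝ)|) ≥ -|(p js : ℝ) - (b' js : ℝ)| := by
      have := abs_sub_abs_le_abs_sub ((b' js : ℝ)) ((p js : ℝ))
      rw [abs_sub_comm] at this
      linarith
    have h6 : |(p js : ℝ) - (b' js : ℝ)| ≤ S := by
      have he : ((p js - b' js).natAbs : ℝ) = |(p js : ℝ) - (b' js : ℝ)| := by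
        rw [Nat.cast_natAbs]; push_cast; ring_nf
      rw [← he]; exact h2
    have h7 : |(b' js : ℝ)| = (M : ℝ) * |(b js : ℝ)| := by
      have : b' js = (M : ℤ) * b js := by simp [hb']
      rw [this]
      push_cast
      rw [abs_mul, abs_of_nonneg (by positivity : (0:ℝ) ≤ (M:ℝ))]
    have := abs_le_jap p js
    rw [hR]
    linarith
  have hres := path_bound σ C hC hstep S₀ a' b' rfl R hRpos hbox
  have hσa : σ a' = σ a := hhom a ha N hN
  have hσb : σ b' = σ b := hhom b hb M hM
  rw [hσa, hσb] at hres
  refine hres.trans ?_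
  gcongr

/-- the integer approximating sequence -/
noncomputable def nseq {n : ℕ} (v : Fin n → ℝ) (k : ℕ) : Fin n → ℤ := fun j => ⌊(k : ℝ) * v j⌋

lemma nseq_abs {n : ℕ} (v : Fin n → ℝ) (js : Fin n) (hjs : v js = 1 ∨ v js = -1) (k : ℕ) :
    |((nseq v k js : ℤ) : ℝ)| = (k : ℝ) := by
  rcases hjs with h | h
  · simp [nseq, h]
  · simp only [nseq, h]
    rw [show (k:ℝ) * (-1) = -(k:ℝ) by ring, Int.floor_neg, Int.ceil_natCast]
    push_cast
    simp

lemma nseq_ne_zero {n : ℕ} (v : Fin n → ℝ) (js : Fin n) (hjs : v js = 1 ∨ v js = -1)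
    (k : ℕ) (hk : 0 < k) : nseq v k ≠ 0 := by
  intro h
  have h2 := nseq_abs v js hjs k
  rw [h] at h2
  have h3 : (0:ℝ) = (k:ℝ) := by simpa using h2
  have h4 : k = 0 := by exact_mod_cast h3.symm
  omega

lemma cross_bound (m k : ℕ) (x : ℝ) :
    |(k : ℝ) * (⌊(m : ℝ) * x⌋ : ℝ) - (m : ℝ) * (⌊(k : ℝ) * x⌋ : ℝ)| ≤ (k : ℝ) + m := by
  have h1 := Int.floor_le ((m : ℝ) * x)
  have h2 := Int.lt_floor_add_one ((m : ℝ) * x)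
  have h3 := Int.floor_le ((k : ℝ) * x)
  have h4 := Int.lt_floor_add_one ((k : ℝ) * x)
  have hk : (0:ℝ) ≤ (k:ℝ) := Nat.cast_nonneg k
  have hm : (0:ℝ) ≤ (m:ℝ) := Nat.cast_nonneg m
  rw [abs_le]
  constructor <;> nlinarith

lemma cauchy_seq' {n : ℕ} (hn : 1 ≤ n) (σ : (Fin n → ℤ) → ℂ) (C : ℝ) (hC : 0 < C)
    (hstep : ∀ (j : Fin n) (ℓ : Fin n → ℤ), ‖σ (ℓ + Pi.single j 1) - σ ℓ‖ ≤ C / jap ℓ)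
    (hhom : ∀ ℓ : Fin n → ℤ, ℓ ≠ 0 → ∀ r : ℕ, 0 < r → σ ((r : ℤ) • ℓ) = σ ℓ)
    (v : Fin n → ℝ) (js : Fin n) (hjs : v js = 1 ∨ v js = -1) :
    CauchySeq (fun k : ℕ => σ (nseq v k)) := by
  rw [Metric.cauchySeq_iff]
  intro ε hε
  set K : ℕ := max (4 * n) (⌈4 * C * n / ε⌉₊ + 1) with hK
  have hK4n : 4 * n ≤ K := le_max_left _ _
  have hK1 : 1 ≤ K := le_trans (by omega) hK4n
  have hKe : 4 * C * n / ε < (K : ℝ) := by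
    have h1 : 4 * C * n / ε ≤ (⌈4 * C * n / ε⌉₊ : ℝ) := Nat.le_ceil _
    have h2 : ((⌈4 * C * n / ε⌉₊ + 1 : ℕ) : ℝ) ≤ (K : ℝ) := by
      exact_mod_cast Nat.cast_le.mpr (le_max_right _ _)
    push_cast at h2
    linarith
  refine ⟨K, fun m hm k hk => ?_⟩
  have hm0 : 0 < m := lt_of_lt_of_le hK1 hm
  have hk0 : 0 < k := lt_of_lt_of_le hK1 hk
  have hmr : (K : ℝ) ≤ (m : ℝ) := Nat.cast_le.mpr hm
  have hkr : (K : ℝ) ≤ (k : ℝ) := Nat.cast_le.mpr hk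
  have hKr : (4 : ℝ) * n ≤ K := by exact_mod_cast Nat.cast_le.mpr hK4n
  have hn1 : (1 : ℝ) ≤ n := by exact_mod_cast hn
  have hKpos : (0:ℝ) < K := by linarith
  set S : ℝ := (n : ℝ) * ((m : ℝ) + k) with hS
  have habs : |((nseq v k js : ℤ) : ℝ)| = (k : ℝ) := nseq_abs v js hjs k
  have hSbound : S ≤ (m : ℝ) * k / 2 := by
    have h1 : (n : ℝ) ≤ (k : ℝ) / 4 := by linarith
    have h2 : (n : ℝ) ≤ (m : ℝ) / 4 := by linarith
    have hmpos : (0:ℝ) < m := by exact_mod_cast hm0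
    have hkpos : (0:ℝ) < k := by exact_mod_cast hk0
    nlinarith
  have hlt : S < (m : ℝ) * |((nseq v k js : ℤ) : ℝ)| := by
    rw [habs]
    have hmpos : (0:ℝ) < m := by exact_mod_cast hm0
    have hkpos : (0:ℝ) < k := by exact_mod_cast hk0
    nlinarith
  rw [dist_eq_norm]
  have hcomp := compare2 σ C (le_of_lt hC) hstep hhom (nseq v m) (nseq v k)
    (nseq_ne_zero v js hjs m hm0) (nseq_ne_zero v js hjs k hk0) k m hk0 hm0 js S
    ?_ hlt
  · rw [habs] at hcomp
    have hKε : 4 * C * (n:ℝ) < ε * K := by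
      rw [div_lt_iff₀ hε] at hKe
      nlinarith
    refine lt_of_le_of_lt (hcomp.trans ?_) (show 4 * C * (n:ℝ) / K < ε by
      rw [div_lt_iff₀ hKpos]
      linarith)
    have hmpos : (0:ℝ) < m := by exact_mod_cast hm0
    have hkpos : (0:ℝ) < k := by exact_mod_cast hk0
    have hdpos : (0:ℝ) < (m : ℝ) * k / 2 := by positivity
    have hSpos : 0 ≤ S := by positivity
    calc C * S / ((m : ℝ) * k - S) ≤ C * S / ((m : ℝ) * k / 2) := by
          apply div_le_div_of_nonneg_left (by positivity) hdpos
          linarith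
    _ = 2 * C * (n : ℝ) * ((m:ℝ) + k) / ((m:ℝ) * k) := by
          rw [hS]; field_simp
    _ ≤ 4 * C * n / K := by
          rw [div_le_div_iff₀ (by positivity) hKpos]
          have e1 : (K:ℝ) * ((m:ℝ) + k) ≤ 2 * ((m:ℝ) * k) := by nlinarith
          have e2 := mul_le_mul_of_nonneg_left e1 (show (0:ℝ) ≤ 2 * C * n by positivity)
          nlinarith [e2]
  · rw [hS]
    calc ∑ j, |(k : ℝ) * ((nseq v m j : ℤ) : ℝ) - (m : ℝ) * ((nseq v k j : ℤ) : ℝ)|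
        ≤ ∑ _j : Fin n, ((k : ℝ) + m) :=
          Finset.sum_le_sum (fun j _ => cross_bound m k (v j))
    _ = (n : ℝ) * ((m : ℝ) + k) := by
          rw [Finset.sum_const, Finset.card_univ, Fintype.card_fin]
          push_cast; ring

noncomputable def glim {n : ℕ} (σ : (Fin n → ℤ) → ℂ) (v : Fin n → ℝ) : ℂ :=
  limUnder atTop (fun k : ℕ => σ (nseq v k))

lemma tendsto_glim {n : ℕ} (hn : 1 ≤ n) (σ : (Fin n → ℤ) → ℂ) (C : ℝ) (hC : 0 < C)
    (hstep : ∀ (j : Fin n) (ℓ : Fin n → ℤ), ‖σ (ℓ + Pi.single j 1) - σ ℓ‖ ≤ C / jap ℓ)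
    (hhom : ∀ ℓ : Fin n → ℤ, ℓ ≠ 0 → ∀ r : ℕ, 0 < r → σ ((r : ℤ) • ℓ) = σ ℓ)
    (v : Fin n → ℝ) (js : Fin n) (hjs : v js = 1 ∨ v js = -1) :
    Tendsto (fun k : ℕ => σ (nseq v k)) atTop (𝓝 (glim σ v)) :=
  (cauchy_seq' hn σ C hC hstep hhom v js hjs).tendsto_limUnder

lemma floor_diff_bound (k : ℕ) (x y : ℝ) :
    |((⌊(k:ℝ) * x⌋ : ℤ) : ℝ) - ((⌊(k:ℝ) * y⌋ : ℤ) : ℝ)| ≤ (k:ℝ) * |x - y| + 1 := by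
  have h1 := Int.floor_le ((k : ℝ) * x)
  have h2 := Int.lt_floor_add_one ((k : ℝ) * x)
  have h3 := Int.floor_le ((k : ℝ) * y)
  have h4 := Int.lt_floor_add_one ((k : ℝ) * y)
  have hk : (0:ℝ) ≤ (k:ℝ) := Nat.cast_nonneg k
  have h5 : x - y ≤ |x - y| := le_abs_self _
  have h6 : -(x - y) ≤ |x - y| := neg_le_abs _
  rw [abs_le]
  constructor <;> nlinarith

lemma dist_glim_le {n : ℕ} (hn : 1 ≤ n) (σ : (Fin n → ℤ) → ℂ) (C : ℝ) (hC : 0 < C)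
    (hstep : ∀ (j : Fin n) (ℓ : Fin n → ℤ), ‖σ (ℓ + Pi.single j 1) - σ ℓ‖ ≤ C / jap ℓ)
    (hhom : ∀ ℓ : Fin n → ℤ, ℓ ≠ 0 → ∀ r : ℕ, 0 < r → σ ((r : ℤ) • ℓ) = σ ℓ)
    (u v : Fin n → ℝ) (ju jv : Fin n)
    (hju : u ju = 1 ∨ u ju = -1) (hjv : v jv = 1 ∨ v jv = -1)
    (D : ℝ) (hD : ∑ j, |v j - u j| ≤ D) (hD1 : D < 1) :
    dist (glim σ v) (glim σ u) ≤ C * D / (1 - D) := by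
  have hD0 : 0 ≤ D :=
    le_trans (Finset.sum_nonneg fun j _ => abs_nonneg _) hD
  have h1 := tendsto_glim hn σ C hC hstep hhom v jv hjv
  have h2 := tendsto_glim hn σ C hC hstep hhom u ju hju
  have h3 := h1.dist h2
  set B : ℕ → ℝ := fun k => C * ((k:ℝ) * D + n) / ((k:ℝ) - ((k:ℝ) * D + n)) with hB
  set K₀ : ℕ := ⌈((n:ℝ) + 1) / (1 - D)⌉₊ + 1 with hK₀
  have hK₀big : ∀ k : ℕ, K₀ ≤ k → (k:ℝ) * D + n + 1 ≤ (k:ℝ) := by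
    intro k hk
    have e1 : ((n:ℝ) + 1) / (1 - D) ≤ (K₀ : ℝ) := by
      rw [hK₀]; push_cast; linarith [Nat.le_ceil (((n:ℝ) + 1) / (1 - D))]
    have e2 : (K₀:ℝ) ≤ k := Nat.cast_le.mpr hk
    have e3 : ((n:ℝ) + 1) ≤ (k:ℝ) * (1 - D) := by
      rw [div_le_iff₀ (by linarith)] at e1
      nlinarith
    nlinarith
  -- the limit of B
  have h4 : Tendsto B atTop (𝓝 (C * D / (1 - D))) := by
    have hden : Tendsto (fun k : ℕ => 1 - D - (n:ℝ)/k) atTop (𝓝 (1 - D)) := by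
      simpa using (tendsto_const_div_atTop_nhds_zero_nat (n:ℝ)).const_sub (1 - D)
    have hnum : Tendsto (fun k : ℕ => C * (D + (n:ℝ)/k)) atTop (𝓝 (C * D)) := by
      simpa using ((tendsto_const_div_atTop_nhds_zero_nat (n:ℝ)).const_add D).const_mul C
    have h5 := hnum.div hden (by linarith : (1:ℝ) - D ≠ 0)
    refine h5.congr' ?_
    filter_upwards [eventually_ge_atTop K₀] with k hk
    have hk1 : 1 ≤ k := le_trans (by omega) hk
    have hkpos : (0:ℝ) < k := by exact_mod_cast hk1
    have hbig := hK₀big k hk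
    rw [hB]
    simp only [Pi.div_apply]
    field_simp
    ring
  -- eventual bound
  have h5 : ∀ᶠ k : ℕ in atTop, dist (σ (nseq v k)) (σ (nseq u k)) ≤ B k := by
    filter_upwards [eventually_ge_atTop (max K₀ 1)] with k hk
    have hk1 : 1 ≤ k := le_trans (le_max_right _ _) hk
    have hkK : K₀ ≤ k := le_trans (le_max_left _ _) hk
    have hk0 : 0 < k := hk1
    have hkpos : (0:ℝ) < k := by exact_mod_cast hk0
    have habs : |((nseq u k ju : ℤ) : ℝ)| = (k : ℝ) := nseq_abs u ju hju k
    have hbig := hK₀big k hkK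
    have hS : (∑ j, |(k : ℝ) * ((nseq v k j : ℤ) : ℝ) - (k : ℝ) * ((nseq u k j : ℤ) : ℝ)|)
        ≤ (k:ℝ) * ((k:ℝ) * D + n) := by
      have e1 : ∀ j : Fin n, |(k : ℝ) * ((nseq v k j : ℤ) : ℝ) - (k : ℝ) * ((nseq u k j : ℤ) : ℝ)|
          ≤ (k:ℝ) * ((k:ℝ) * |v j - u j| + 1) := by
        intro j
        rw [show (k : ℝ) * ((nseq v k j : ℤ) : ℝ) - (k : ℝ) * ((nseq u k j : ℤ) : ℝ)
            = (k:ℝ) * (((nseq v k j : ℤ) : ℝ) - ((nseq u k j : ℤ) : ℝ)) by ring,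
          abs_mul, abs_of_nonneg (Nat.cast_nonneg k : (0:ℝ) ≤ k)]
        exact mul_le_mul_of_nonneg_left (floor_diff_bound k (v j) (u j)) (Nat.cast_nonneg k)
      refine le_trans (Finset.sum_le_sum fun j _ => e1 j) ?_
      rw [← Finset.mul_sum]
      refine mul_le_mul_of_nonneg_left ?_ (Nat.cast_nonneg k)
      rw [Finset.sum_add_distrib, ← Finset.mul_sum, Finset.sum_const, Finset.card_univ,
        Fintype.card_fin, nsmul_eq_mul, mul_one]
      have e2 : (k:ℝ) * (∑ j, |v j - u j|) ≤ (k:ℝ) * D :=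
        mul_le_mul_of_nonneg_left hD (Nat.cast_nonneg k)
      linarith
    have hlt : (k:ℝ) * ((k:ℝ) * D + n) < (k : ℝ) * |((nseq u k ju : ℤ) : ℝ)| := by
      rw [habs]
      nlinarith
    have hcomp := compare2 σ C (le_of_lt hC) hstep hhom (nseq v k) (nseq u k)
      (nseq_ne_zero v jv hjv k hk0) (nseq_ne_zero u ju hju k hk0) k k hk0 hk0 ju
      ((k:ℝ) * ((k:ℝ) * D + n)) hS hlt
    rw [habs] at hcomp
    rw [dist_eq_norm]
    refine hcomp.trans (le_of_eq ?_)
    rw [hB]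
    rw [show (k:ℝ) * (k:ℝ) - (k:ℝ) * ((k:ℝ) * D + n) = (k:ℝ) * ((k:ℝ) - ((k:ℝ) * D + n)) by ring,
      show C * ((k:ℝ) * ((k:ℝ) * D + n)) = (k:ℝ) * (C * ((k:ℝ) * D + n)) by ring,
      mul_div_mul_left _ _ (ne_of_gt hkpos)]
  exact le_of_tendsto_of_tendsto h3 h4 h5

lemma glim_latt {n : ℕ} (σ : (Fin n → ℤ) → ℂ) (C : ℝ) (hC : 0 < C)
    (hstep : ∀ (j : Fin n) (ℓ : Fin n → ℤ), ‖σ (ℓ + Pi.single j 1) - σ ℓ‖ ≤ C / jap ℓ)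
    (hhom : ∀ ℓ : Fin n → ℤ, ℓ ≠ 0 → ∀ r : ℕ, 0 < r → σ ((r : ℤ) • ℓ) = σ ℓ)
    (ℓ : Fin n → ℤ) (hℓ : ℓ ≠ 0) (m : ℕ) (hm : 0 < m) (v : Fin n → ℝ)
    (hv : ∀ j, (m : ℝ) * v j = (ℓ j : ℝ)) (js : Fin n) (hjs : v js = 1 ∨ v js = -1) :
    glim σ v = σ ℓ := by
  have habsl : |(ℓ js : ℝ)| = (m : ℝ) := by
    rw [← hv js]
    rcases hjs with h | h <;> rw [h] <;> simp
  have htend : Tendsto (fun k : ℕ => σ (nseq v k)) atTop (𝓝 (σ ℓ)) := by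
    rw [tendsto_iff_dist_tendsto_zero]
    have hbnd : Tendsto (fun k : ℕ => C * ((n:ℝ) * m) / ((k:ℝ) * m - (n:ℝ) * m))
        atTop (𝓝 0) := by
      apply Tendsto.div_atTop (tendsto_const_nhds)
      have h1 : Tendsto (fun k : ℕ => (k:ℝ) * m) atTop atTop :=
        Tendsto.atTop_mul_const (by exact_mod_cast hm) tendsto_natCast_atTop_atTop
      exact tendsto_atTop_add_const_right _ _ h1
    refine squeeze_zero' (Eventually.of_forall fun k => dist_nonneg) ?_ hbnd
    filter_upwards [eventually_gt_atTop n] with k hk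
    have hk0 : 0 < k := lt_of_le_of_lt (Nat.zero_le n) hk
    have hS : (∑ j, |(m : ℝ) * ((nseq v k j : ℤ) : ℝ) - (k : ℝ) * ((ℓ j : ℤ) : ℝ)|)
        ≤ (n:ℝ) * m := by
      have e1 : ∀ j : Fin n, |(m : ℝ) * ((nseq v k j : ℤ) : ℝ) - (k : ℝ) * ((ℓ j : ℤ) : ℝ)|
          ≤ (m:ℝ) := by
        intro j
        have f1 := Int.floor_le ((k : ℝ) * v j)
        have f2 := Int.lt_floor_add_one ((k : ℝ) * v j)
        have hkl : (k : ℝ) * (ℓ j : ℝ) = (m:ℝ) * ((k:ℝ) * v j) := by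
          rw [← hv j]; ring
        have hmp : (0:ℝ) < m := by exact_mod_cast hm
        rw [abs_le]
        constructor <;> [skip; skip] <;>
          · simp only [nseq]
            nlinarith
      refine le_trans (Finset.sum_le_sum fun j _ => e1 j) ?_
      rw [Finset.sum_const, Finset.card_univ, Fintype.card_fin, nsmul_eq_mul]
    have hlt : (n:ℝ) * m < (k : ℝ) * |(ℓ js : ℝ)| := by
      rw [habsl]
      have : (n:ℝ) < k := by exact_mod_cast hk
      have hmp : (0:ℝ) < m := by exact_mod_cast hm
      nlinarith
    have hcomp := compare2 σ C (le_of_lt hC) hstep hhom (nseq v k) ℓ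
      (nseq_ne_zero v js hjs k hk0) hℓ m k hm hk0 js ((n:ℝ) * m) hS hlt
    rw [habsl] at hcomp
    rw [dist_eq_norm]
    refine hcomp.trans (le_of_eq ?_)
    ring_nf
  exact htend.limUnder_eq

lemma exists_sup_index {n : ℕ} (hn : 1 ≤ n) (ξ : Fin n → ℝ) : ∃ js, ‖ξ‖ = |ξ js| := by
  have hne : (Finset.univ : Finset (Fin n)).Nonempty := ⟨⟨0, hn⟩, Finset.mem_univ _⟩
  obtain ⟨j, _, hj⟩ := Finset.exists_mem_eq_sup Finset.univ hne (fun i => ‖ξ i‖₊)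
  refine ⟨j, ?_⟩
  rw [Pi.norm_def, hj]
  simp [Real.norm_eq_abs]

lemma unit_witness {n : ℕ} (hn : 1 ≤ n) (ξ : Fin n → ℝ) (hξ : ξ ≠ 0) :
    ∃ js, (‖ξ‖⁻¹ • ξ) js = 1 ∨ (‖ξ‖⁻¹ • ξ) js = -1 := by
  obtain ⟨js, hjs⟩ := exists_sup_index hn ξ
  have hpos : 0 < ‖ξ‖ := norm_pos_iff.mpr hξ
  refine ⟨js, ?_⟩
  have habs : |(‖ξ‖⁻¹ • ξ) js| = 1 := by
    rw [Pi.smul_apply, smul_eq_mul, abs_mul, abs_of_pos (inv_pos.mpr hpos), ← hjs,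
      inv_mul_cancel₀ (ne_of_gt hpos)]
  exact (abs_eq zero_le_one).mp habs

/-- A toroidal symbol of order `0` which is `0`-homogeneous on the lattice extends to a
continuous `0`-homogeneous function on `ℝ^n ∖ {0}`. -/
theorem exists_continuous_homogeneous_extension (n : ℕ) (hn : 1 ≤ n)
    (σ : (Fin n → ℤ) → ℂ) (hσ : ToroidalSymbol 0 σ)
    (hhom : ∀ ℓ : Fin n → ℤ, ℓ ≠ 0 → ∀ r : ℕ, 0 < r → σ ((r : ℤ) • ℓ) = σ ℓ) :
    ∃ f : (Fin n → ℝ) → ℂ,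
      ContinuousOn f {ξ : Fin n → ℝ | ξ ≠ 0} ∧
      (∀ t : ℝ, 0 < t → ∀ ξ : Fin n → ℝ, ξ ≠ 0 → f (t • ξ) = f ξ) ∧
      (∀ ℓ : Fin n → ℤ, ℓ ≠ 0 → f (latt ℓ) = σ ℓ) := by
  obtain ⟨C, hC, hstep⟩ := step_bound σ hσ
  set w : (Fin n → ℝ) → (Fin n → ℝ) := fun ξ => ‖ξ‖⁻¹ • ξ with hw
  refine ⟨fun ξ => glim σ (w ξ), ?_, ?_, ?_⟩
  · -- continuity
    have hopen : IsOpen {ξ : Fin n → ℝ | ξ ≠ 0} := isOpen_compl_singleton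
    refine continuousOn_of_forall_continuousAt (fun ξ₀ hξ₀ => ?_)
    have hξ₀ : ξ₀ ≠ 0 := hξ₀
    have hn0 : ‖ξ₀‖ ≠ 0 := norm_ne_zero_iff.mpr hξ₀
    obtain ⟨j₀, hj₀⟩ := unit_witness hn ξ₀ hξ₀
    have hwcont : ContinuousAt w ξ₀ := by
      exact (continuous_norm.continuousAt.inv₀ hn0).smul continuousAt_id
    have hw0 : w ξ₀ = ‖ξ₀‖⁻¹ • ξ₀ := rfl
    set DD : (Fin n → ℝ) → ℝ := fun ξ => ∑ j, |w ξ j - w ξ₀ j| with hDD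
    have hDDcont : Tendsto DD (𝓝 ξ₀) (𝓝 0) := by
      have houter : Continuous fun y : Fin n → ℝ => ∑ j, |y j - w ξ₀ j| := by
        refine continuous_finset_sum _ (fun j _ => ?_)
        exact ((continuous_apply j).sub continuous_const).abs
      have h2 : Tendsto (fun ξ => ∑ j, |w ξ j - w ξ₀ j|) (𝓝 ξ₀)
          (𝓝 (∑ j, |w ξ₀ j - w ξ₀ j|)) := houter.continuousAt.comp hwcont
      simpa using h2
    rw [ContinuousAt, tendsto_iff_dist_tendsto_zero]
    have hbnd : Tendsto (fun ξ => 2 * C * DD ξ) (𝓝 ξ₀) (𝓝 0) := by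
      simpa using (hDDcont.const_mul (2 * C))
    refine squeeze_zero' (Eventually.of_forall fun ξ => dist_nonneg) ?_ hbnd
    have hev1 : ∀ᶠ ξ in 𝓝 ξ₀, ξ ≠ 0 := hopen.mem_nhds hξ₀
    have hev2 : ∀ᶠ ξ in 𝓝 ξ₀, DD ξ < 1/2 :=
      hDDcont.eventually (Filter.Tendsto.eventually_lt_const (by norm_num) tendsto_id)
    filter_upwards [hev1, hev2] with ξ hξ hDξ
    obtain ⟨j₁, hj₁⟩ := unit_witness hn ξ hξ
    have hDξ0 : 0 ≤ DD ξ := Finset.sum_nonneg fun j _ => abs_nonneg _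
    have hdle := dist_glim_le hn σ C hC hstep hhom (w ξ₀) (w ξ) j₀ j₁ hj₀ hj₁
      (DD ξ) (le_refl _) (by linarith)
    refine hdle.trans ?_
    rw [div_le_iff₀ (by linarith)]
    have key : 2 * C * DD ξ * (1/2) ≤ 2 * C * DD ξ * (1 - DD ξ) :=
      mul_le_mul_of_nonneg_left (by linarith) (by positivity)
    linarith
  · -- homogeneity
    intro t ht ξ hξ
    have hwts : w (t • ξ) = w ξ := by
      rw [hw]
      simp only
      rw [norm_smul, Real.norm_eq_abs, abs_of_pos ht, smul_smul, mul_inv]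
      have hn0 : ‖ξ‖ ≠ 0 := norm_ne_zero_iff.mpr hξ
      rw [show t⁻¹ * ‖ξ‖⁻¹ * t = ‖ξ‖⁻¹ by field_simp]
    exact congrArg (glim σ) hwts
  · -- lattice values
    intro ℓ hℓ
    have hlne : latt ℓ ≠ 0 := by
      intro h
      apply hℓ
      funext j
      have := congrFun h j
      simpa [latt] using this
    have hpos : 0 < ‖latt ℓ‖ := norm_pos_iff.mpr hlne
    obtain ⟨js, hjs⟩ := exists_sup_index hn (latt ℓ)
    set m : ℕ := (ℓ js).natAbs with hm
    have hmr : (m : ℝ) = ‖latt ℓ‖ := by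
      rw [hjs, hm]
      rw [Nat.cast_natAbs, Int.cast_abs]
      rfl
    have hm0 : 0 < m := by
      by_contra h
      push_neg at h
      interval_cases m
      rw [← hmr] at hpos
      simp at hpos
    refine Eq.trans ?_ (glim_latt σ C hC hstep hhom ℓ hℓ m hm0 (w (latt ℓ)) ?_ js ?_)
    · rfl
    · intro j
      rw [hw]
      simp only [Pi.smul_apply, smul_eq_mul]
      rw [hmr]
      field_simp
      rfl
    · obtain ⟨j', hj'⟩ := unit_witness hn (latt ℓ) hlne
      -- need witness at js specifically
      have habs : |(w (latt ℓ)) js| = 1 := by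
        rw [hw]
        simp only [Pi.smul_apply, smul_eq_mul, abs_mul, abs_of_pos (inv_pos.mpr hpos)]
        rw [show |latt ℓ js| = ‖latt ℓ‖ from hjs.symm, inv_mul_cancel₀ (ne_of_gt hpos)]
      exact (abs_eq zero_le_one).mp habs
end

section
/- Let n ≥ 1 and let σ : ℤ^n → ℂ satisfy the first-order toroidal difference estimate: there is C₁ > 0 such that |σ(ℓ+e_j) − σ(ℓ)| ≤ C₁ ⟨ℓ⟩^{−1} for all ℓ ∈ ℤ^n and all j = 1, …, n. Then there exists C > 0 such that for any ℓ₀, ℓ₁ ∈ ℤ^n ∖ {0} lying in the same closed orthant, i.e. with (ℓ₀)_j (ℓ₁)_j ≥ 0 for each j = 1, …, n, one has |σ(ℓ₀) − σ(ℓ₁)| ≤ C (1 + |log(|ℓ₀| / |ℓ₁|)|). -/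
open scoped BigOperators

/-- The Euclidean norm on `ℝ^n`. -/
noncomputable def enorm' {n : ℕ} (x : Fin n → ℝ) : ℝ := Real.sqrt (∑ i, x i ^ 2)

-- Cauchy-Schwarz style bound: (1 + ∑|m j|)² ≤ (n+1)(1 + ∑ m j²)
lemma cs_aux (n : ℕ) (m : Fin n → ℤ) :
    (1 + ∑ j, |(m j : ℝ)|) ^ 2 ≤ (n + 1) * (1 + ∑ j, (m j : ℝ) ^ 2) := by
  have h := sq_sum_le_card_mul_sum_sq (s := (Finset.univ : Finset (Fin (n+1))))
    (f := Fin.cons 1 (fun j => |(m j : ℝ)|))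
  have h1 : ∑ i, Fin.cons (α := fun _ => ℝ) 1 (fun j => |(m j : ℝ)|) i
      = 1 + ∑ j, |(m j : ℝ)| := Fin.sum_cons 1 _
  have h2 : ∑ i, (Fin.cons (α := fun _ => ℝ) 1 (fun j => |(m j : ℝ)|) i) ^ 2
      = 1 + ∑ j, (m j : ℝ) ^ 2 := by
    have : (fun i => (Fin.cons (α := fun _ => ℝ) 1 (fun j => |(m j : ℝ)|) i) ^ 2)
        = Fin.cons (α := fun _ => ℝ) 1 (fun j => (m j : ℝ) ^ 2) := by
      funext i
      refine Fin.cases ?_ ?_ i <;> simp [sq_abs]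
    rw [this, Fin.sum_cons]
  rw [h1, h2] at h
  simpa using h

lemma jap_ge (n : ℕ) (m : Fin n → ℤ) :
    (1 + ∑ j, |(m j : ℝ)|) ≤ Real.sqrt (n + 1) * jap m := by
  rw [jap, ← Real.sqrt_mul (by positivity)]
  rw [show (1 + ∑ j, |(m j : ℝ)|) = Real.sqrt ((1 + ∑ j, |(m j : ℝ)|) ^ 2) by
    rw [Real.sqrt_sq (by positivity)]]
  exact Real.sqrt_le_sqrt (cs_aux n m)

lemma jap_ge_one (n : ℕ) (m : Fin n → ℤ) : 1 ≤ jap m := by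
  rw [jap, Real.le_sqrt (by norm_num) (by positivity)]
  have : (0:ℝ) ≤ ∑ j, (m j : ℝ)^2 := by positivity
  linarith

lemma natAbs_sum_cast (n : ℕ) (m : Fin n → ℤ) :
    ((∑ j, (m j).natAbs : ℕ) : ℝ) = ∑ j, |(m j : ℝ)| := by
  push_cast
  refine Finset.sum_congr rfl fun j _ => ?_
  rw [Nat.cast_natAbs]
  exact Int.cast_abs

lemma step_cost (n : ℕ) (C₁ : ℝ) (hC₁ : 0 < C₁) (m : Fin n → ℤ) (s : ℕ)
    (hs : s ≤ ∑ j, (m j).natAbs) :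
    C₁ * jap m ^ (-1 : ℝ) ≤ 2 * Real.sqrt (n + 1) * C₁ *
      (Real.log (2 + (s : ℝ)) - Real.log (1 + (s : ℝ))) := by
  set S := Real.sqrt (n + 1) with hS
  have hS1 : 1 ≤ S := by
    rw [hS, Real.le_sqrt (by norm_num) (by positivity)]
    norm_num
  have hjpos : 0 < jap m := lt_of_lt_of_le one_pos (jap_ge_one n m)
  have hcast : (s : ℝ) ≤ ∑ j, |(m j : ℝ)| := by
    rw [← natAbs_sum_cast]
    exact_mod_cast hs
  have hj : (2 + (s : ℝ)) / (2 * S) ≤ jap m := by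
    rw [div_le_iff₀ (by positivity)]
    have h1 := jap_ge n m
    nlinarith [jap_ge_one n m]
  have hinv : jap m ^ (-1 : ℝ) ≤ (2 * S) / (2 + (s : ℝ)) := by
    rw [Real.rpow_neg_one]
    rw [inv_le_iff_one_le_mul₀ hjpos] at *
    calc (1:ℝ) = ((2 + (s:ℝ)) / (2 * S)) * ((2*S) / (2 + (s:ℝ))) := by
          field_simp
      _ ≤ jap m * (2 * S / (2 + (s:ℝ))) := by
          apply mul_le_mul_of_nonneg_right hj (by positivity)
      _ = 2 * S / (2 + (s:ℝ)) * jap m := mul_comm _ _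
  have hlog : 1 / (2 + (s : ℝ)) ≤ Real.log (2 + (s:ℝ)) - Real.log (1 + (s:ℝ)) := by
    have hx : (0:ℝ) < (1 + (s:ℝ)) / (2 + (s:ℝ)) := by positivity
    have := Real.log_le_sub_one_of_pos hx
    rw [Real.log_div (by positivity) (by positivity)] at this
    have h2 : (1 + (s:ℝ)) / (2 + (s:ℝ)) - 1 = -(1 / (2 + (s:ℝ))) := by
      field_simp
      norm_num
    rw [h2] at this
    linarith
  calc C₁ * jap m ^ (-1 : ℝ) ≤ C₁ * ((2 * S) / (2 + (s:ℝ))) :=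
        mul_le_mul_of_nonneg_left hinv hC₁.le
    _ = 2 * S * C₁ * (1 / (2 + (s:ℝ))) := by ring
    _ ≤ 2 * S * C₁ * (Real.log (2 + (s:ℝ)) - Real.log (1 + (s:ℝ))) := by
        apply mul_le_mul_of_nonneg_left hlog (by positivity)

lemma ascent (n : ℕ) (σ : (Fin n → ℤ) → ℂ) (C₁ : ℝ) (hC₁ : 0 < C₁)
    (h : ∀ (ℓ : Fin n → ℤ) (j : Fin n),
      ‖σ (ℓ + Pi.single j 1) - σ ℓ‖ ≤ C₁ * jap ℓ ^ (-1 : ℝ)) :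
    ∀ (d : ℕ) (a b : Fin n → ℤ), (∀ j, 0 ≤ a j * b j) →
      (∀ j, (a j).natAbs ≤ (b j).natAbs) →
      (∑ j, (b j).natAbs) = (∑ j, (a j).natAbs) + d →
      ‖σ b - σ a‖ ≤ 2 * Real.sqrt (n + 1) * C₁ *
        (Real.log ((1 : ℝ) + (∑ j, (b j).natAbs : ℕ)) -
         Real.log ((1 : ℝ) + (∑ j, (a j).natAbs : ℕ))) := by
  intro d
  induction d with
  | zero =>
    intro a b horth habs hsum
    have hab : a = b := by
      funext k
      have hk : (a k).natAbs = (b k).natAbs := by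
        by_contra hne
        have hlt : (a k).natAbs < (b k).natAbs := lt_of_le_of_ne (habs k) hne
        have h1 : ∑ j ∈ Finset.univ.erase k, (a j).natAbs ≤
            ∑ j ∈ Finset.univ.erase k, (b j).natAbs :=
          Finset.sum_le_sum (fun j _ => habs j)
        have h2 := Finset.add_sum_erase Finset.univ (fun j => (a j).natAbs)
          (Finset.mem_univ k)
        have h3 := Finset.add_sum_erase Finset.univ (fun j => (b j).natAbs)
          (Finset.mem_univ k)
        omega
      rcases Int.natAbs_eq_natAbs_iff.mp hk with heq | heq
      · exact heq
      · have h0 : b k = 0 := by nlinarith [horth k]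
        rw [heq, h0]; ring
    rw [hab]
    simp
  | succ d ih =>
    intro a b horth habs hsum
    obtain ⟨j, hj⟩ : ∃ j, (a j).natAbs < (b j).natAbs := by
      by_contra hc
      push_neg at hc
      have := Finset.sum_le_sum (s := Finset.univ) (fun k _ => hc k)
      omega
    have hbne : b j ≠ 0 := by
      intro h0
      rw [h0] at hj
      simp at hj
    set A := ∑ k, (a k).natAbs with hA
    -- construct a' and its properties, by sign of b j
    obtain ⟨a', horth', habs', hsum', hstep⟩ :
        ∃ a' : Fin n → ℤ, (∀ k, 0 ≤ a' k * b k) ∧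
          (∀ k, (a' k).natAbs ≤ (b k).natAbs) ∧
          (∑ k, (a' k).natAbs) = A + 1 ∧
          ‖σ a' - σ a‖ ≤ 2 * Real.sqrt (n + 1) * C₁ *
            (Real.log (2 + (A : ℝ)) - Real.log (1 + (A : ℝ))) := by
      have hsum_split : ∀ (v : ℤ), ∑ k, ((Function.update a j v) k).natAbs
          = v.natAbs + ∑ k ∈ Finset.univ.erase j, (a k).natAbs := by
        intro v
        have : (fun k => ((Function.update a j v) k).natAbs)
            = Function.update (fun k => (a k).natAbs) j v.natAbs := by
          funext k
          by_cases hk : k = j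
          · subst hk; simp
          · simp [Function.update_apply, hk]
        rw [this, Finset.sum_update_of_mem (Finset.mem_univ j)]
        rw [Finset.sdiff_singleton_eq_erase]
      have hAsplit : A = (a j).natAbs + ∑ k ∈ Finset.univ.erase j, (a k).natAbs := by
        rw [hA, ← Finset.add_sum_erase Finset.univ (fun k => (a k).natAbs) (Finset.mem_univ j)]
      rcases lt_or_gt_of_ne hbne with hbneg | hbpos
      · -- b j < 0, step down
        have haj : a j ≤ 0 := by
          by_contra hpos
          push_neg at hpos
          nlinarith [horth j]
        refine ⟨Function.update a j (a j - 1), ?_, ?_, ?_, ?_⟩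
        · intro k
          by_cases hk : k = j
          · subst hk; simp only [Function.update_self]; nlinarith
          · simpa [Function.update_apply, hk] using horth k
        · intro k
          by_cases hk : k = j
          · subst hk; simp only [Function.update_self]; omega
          · simpa [Function.update_apply, hk] using habs k
        · rw [hsum_split]; omega
        · have heq : a = Function.update a j (a j - 1) + Pi.single j 1 := by
            funext k
            by_cases hk : k = j
            · subst hk; simp
            · simp [Function.update_apply, hk, Pi.single_apply]
          have : ‖σ (Function.update a j (a j - 1)) - σ a‖
              = ‖σ (Function.update a j (a j - 1) + Pi.single j 1)
                - σ (Function.update a j (a j - 1))‖ := by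
            rw [norm_sub_rev, ← heq]
          rw [this]
          refine le_trans (h _ j) ?_
          refine step_cost n C₁ hC₁ _ A ?_
          rw [hsum_split]; omega
      · -- b j > 0, step up
        have haj : 0 ≤ a j := by
          by_contra hneg
          push_neg at hneg
          nlinarith [horth j]
        refine ⟨Function.update a j (a j + 1), ?_, ?_, ?_, ?_⟩
        · intro k
          by_cases hk : k = j
          · subst hk; simp only [Function.update_self]; nlinarith
          · simpa [Function.update_apply, hk] using horth k
        · intro k
          by_cases hk : k = j
          · subst hk; simp only [Function.update_self]; omega
          · simpa [Function.update_apply, hk] using habs k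
        · rw [hsum_split]; omega
        · have heq : Function.update a j (a j + 1) = a + Pi.single j 1 := by
            funext k
            by_cases hk : k = j
            · subst hk; simp
            · simp [Function.update_apply, hk, Pi.single_apply]
          rw [heq]
          exact le_trans (h a j) (step_cost n C₁ hC₁ a A le_rfl)
    have hsum'' : (∑ k, (b k).natAbs) = (∑ k, (a' k).natAbs) + d := by omega
    have hmain := ih a' b horth' habs' hsum''
    have tri : ‖σ b - σ a‖ ≤ ‖σ b - σ a'‖ + ‖σ a' - σ a‖ := by
      have hsplit : σ b - σ a = (σ b - σ a') + (σ a' - σ a) := by ring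
      rw [hsplit]
      exact norm_add_le _ _
    have hcast : ((1 : ℝ) + (∑ k, (a' k).natAbs : ℕ)) = 2 + (A : ℝ) := by
      rw [hsum']
      push_cast
      ring
    rw [hcast] at hmain
    calc ‖σ b - σ a‖ ≤ ‖σ b - σ a'‖ + ‖σ a' - σ a‖ := tri
      _ ≤ 2 * Real.sqrt (n + 1) * C₁ *
            (Real.log ((1 : ℝ) + (∑ k, (b k).natAbs : ℕ)) - Real.log (2 + (A : ℝ)))
          + 2 * Real.sqrt (n + 1) * C₁ *
            (Real.log (2 + (A : ℝ)) - Real.log (1 + (A : ℝ))) := add_le_add hmain hstep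
      _ = 2 * Real.sqrt (n + 1) * C₁ *
            (Real.log ((1 : ℝ) + (∑ k, (b k).natAbs : ℕ)) - Real.log ((1 : ℝ) + (A : ℝ))) := by
          ring

lemma ratio_aux (n : ℕ) (hn : 1 ≤ n) (s0 s1 sv A B : ℝ)
    (hA : 1 ≤ A) (hB : 1 ≤ B) (hA0 : A ≤ s0) (h1 : s1 ≤ Real.sqrt n * B)
    (hv0 : 0 ≤ sv) (hv : sv ≤ s0 + s1) (hle : s0 ≤ s1) :
    2 * Real.log (1 + sv) - Real.log (1 + s0) - Real.log (1 + s1)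
      ≤ 2 * Real.log 2 + Real.log (2 * Real.sqrt n) + (Real.log B - Real.log A) := by
  have hsq : 1 ≤ Real.sqrt n := by
    rw [Real.le_sqrt (by norm_num) (by positivity)]
    norm_num
    exact_mod_cast hn
  have hs0 : 1 ≤ s0 := le_trans hA hA0
  have hs1 : 1 ≤ s1 := le_trans hs0 hle
  have hv2 : 1 + sv ≤ 2 * (1 + s1) := by linarith
  have l1 : Real.log (1 + sv) ≤ Real.log 2 + Real.log (1 + s1) := by
    rw [← Real.log_mul (by norm_num) (by positivity)]
    exact Real.log_le_log (by linarith) hv2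
  have l2 : Real.log (1 + s1) ≤ Real.log (2 * Real.sqrt n) + Real.log B := by
    rw [← Real.log_mul (by positivity) (by positivity)]
    apply Real.log_le_log (by linarith)
    nlinarith
  have l3 : Real.log A ≤ Real.log (1 + s0) := Real.log_le_log (by linarith) (by linarith)
  linarith

lemma ratio_bound (n : ℕ) (hn : 1 ≤ n) (s0 s1 sv A B : ℝ)
    (hA : 1 ≤ A) (hB : 1 ≤ B) (hA0 : A ≤ s0) (hB1 : B ≤ s1)
    (h0 : s0 ≤ Real.sqrt n * A) (h1 : s1 ≤ Real.sqrt n * B)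
    (hv0 : 0 ≤ sv) (hv : sv ≤ s0 + s1) :
    2 * Real.log (1 + sv) - Real.log (1 + s0) - Real.log (1 + s1)
      ≤ 2 * Real.log 2 + Real.log (2 * Real.sqrt n) + |Real.log A - Real.log B| := by
  rcases le_total s0 s1 with hle | hle
  · have := ratio_aux n hn s0 s1 sv A B hA hB hA0 h1 hv0 hv hle
    have habs : Real.log B - Real.log A ≤ |Real.log A - Real.log B| := by
      rw [abs_sub_comm]
      exact le_abs_self _
    linarith
  · have := ratio_aux n hn s1 s0 sv B A hB hA hB1 h0 hv0 (by linarith) hle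
    have habs : Real.log A - Real.log B ≤ |Real.log A - Real.log B| := le_abs_self _
    linarith


lemma enorm'_latt (n : ℕ) (ℓ : Fin n → ℤ) :
    enorm' (latt ℓ) = Real.sqrt (∑ i, (ℓ i : ℝ) ^ 2) := by
  simp [enorm', latt]

lemma one_le_enorm (n : ℕ) (ℓ : Fin n → ℤ) (hne : ℓ ≠ 0) : 1 ≤ enorm' (latt ℓ) := by
  obtain ⟨j, hj⟩ := Function.ne_iff.mp hne
  have hj' : ℓ j ≠ 0 := by simpa using hj
  have h1 : (1 : ℝ) ≤ (ℓ j : ℝ) ^ 2 := by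
    have h2 : 1 ≤ |ℓ j| := Int.one_le_abs hj'
    have h3 : 1 ≤ (ℓ j) ^ 2 := by nlinarith [abs_nonneg (ℓ j), sq_abs (ℓ j)]
    exact_mod_cast h3
  have h2 : (1 : ℝ) ≤ ∑ i, (ℓ i : ℝ) ^ 2 :=
    le_trans h1 (Finset.single_le_sum (f := fun i => ((ℓ i : ℝ)) ^ 2)
      (fun i _ => by positivity) (Finset.mem_univ j))
  rw [enorm'_latt, Real.le_sqrt (by norm_num) (by positivity)]
  linarith

lemma l1_le_sqrt (n : ℕ) (ℓ : Fin n → ℤ) :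
    ((∑ j, (ℓ j).natAbs : ℕ) : ℝ) ≤ Real.sqrt n * enorm' (latt ℓ) := by
  rw [natAbs_sum_cast, enorm'_latt, ← Real.sqrt_mul (by positivity)]
  have h := sq_sum_le_card_mul_sum_sq (s := (Finset.univ : Finset (Fin n)))
    (f := fun j => |(ℓ j : ℝ)|)
  have h2 : (∑ j, |(ℓ j : ℝ)|) ^ 2 ≤ (n : ℝ) * ∑ j, (ℓ j : ℝ) ^ 2 := by
    simpa [sq_abs] using h
  rw [show (∑ j, |(ℓ j : ℝ)|) = Real.sqrt ((∑ j, |(ℓ j : ℝ)|) ^ 2) by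
    rw [Real.sqrt_sq (by positivity)]]
  exact Real.sqrt_le_sqrt h2

lemma sqrt_le_l1 (n : ℕ) (ℓ : Fin n → ℤ) :
    enorm' (latt ℓ) ≤ ((∑ j, (ℓ j).natAbs : ℕ) : ℝ) := by
  rw [natAbs_sum_cast, enorm'_latt]
  have h : ∑ j, (ℓ j : ℝ) ^ 2 ≤ (∑ j, |(ℓ j : ℝ)|) ^ 2 := by
    have := Finset.sum_sq_le_sq_sum_of_nonneg (s := (Finset.univ : Finset (Fin n)))
      (f := fun j => |(ℓ j : ℝ)|) (fun i _ => abs_nonneg _)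
    simpa [sq_abs] using this
  calc Real.sqrt (∑ i, (ℓ i : ℝ) ^ 2) ≤ Real.sqrt ((∑ j, |(ℓ j : ℝ)|) ^ 2) :=
        Real.sqrt_le_sqrt h
    _ = ∑ j, |(ℓ j : ℝ)| := Real.sqrt_sq (by positivity)

/-- If the first differences of `σ` satisfy `|Δ_j σ(ℓ)| ≤ C₁ ⟨ℓ⟩^{-1}`, then for lattice points
in the same closed orthant, `|σ(ℓ₀) - σ(ℓ₁)| ≲ 1 + |log(|ℓ₀|/|ℓ₁|)|`. -/
theorem log_difference_estimate (n : ℕ) (hn : 1 ≤ n) (σ : (Fin n → ℤ) → ℂ)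
    (C₁ : ℝ) (hC₁ : 0 < C₁)
    (h : ∀ (ℓ : Fin n → ℤ) (j : Fin n),
      ‖σ (ℓ + Pi.single j 1) - σ ℓ‖ ≤ C₁ * jap ℓ ^ (-1 : ℝ)) :
    ∃ C > 0, ∀ ℓ₀ ℓ₁ : Fin n → ℤ, ℓ₀ ≠ 0 → ℓ₁ ≠ 0 →
      (∀ j : Fin n, (0 : ℤ) ≤ ℓ₀ j * ℓ₁ j) →
      ‖σ ℓ₀ - σ ℓ₁‖ ≤ C * (1 + |Real.log (enorm' (latt ℓ₀) / enorm' (latt ℓ₁))|) := by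
  set K := 2 * Real.sqrt (n + 1) * C₁ with hK
  have hKpos : 0 < K := by positivity
  have hsqn : 1 ≤ Real.sqrt n := by
    rw [Real.le_sqrt (by norm_num) (by positivity)]
    norm_num
    exact_mod_cast hn
  set c0 := 2 * Real.log 2 + Real.log (2 * Real.sqrt n) with hc0
  have hc0pos : 0 ≤ c0 := by
    have h1 : 0 ≤ Real.log 2 := Real.log_nonneg (by norm_num)
    have h2 : 0 ≤ Real.log (2 * Real.sqrt n) := Real.log_nonneg (by linarith)
    rw [hc0]; linarith
  refine ⟨K * (c0 + 1), mul_pos hKpos (by linarith), ?_⟩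
  intro ℓ₀ ℓ₁ h0 h1 horth
  set ν : Fin n → ℤ := fun j => if (ℓ₁ j).natAbs ≤ (ℓ₀ j).natAbs then ℓ₀ j else ℓ₁ j with hν
  have hν0 : ∀ j, (ℓ₀ j).natAbs ≤ (ν j).natAbs := by
    intro j
    by_cases hc : (ℓ₁ j).natAbs ≤ (ℓ₀ j).natAbs <;> simp [hν, hc] <;> omega
  have hν1 : ∀ j, (ℓ₁ j).natAbs ≤ (ν j).natAbs := by
    intro j
    by_cases hc : (ℓ₁ j).natAbs ≤ (ℓ₀ j).natAbs <;> simp [hν, hc] <;> omega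
  have horth0 : ∀ j, 0 ≤ ℓ₀ j * ν j := by
    intro j
    by_cases hc : (ℓ₁ j).natAbs ≤ (ℓ₀ j).natAbs <;> simp [hν, hc]
    · exact mul_self_nonneg _
    · exact horth j
  have horth1 : ∀ j, 0 ≤ ℓ₁ j * ν j := by
    intro j
    by_cases hc : (ℓ₁ j).natAbs ≤ (ℓ₀ j).natAbs <;> simp [hν, hc]
    · rw [mul_comm]; exact horth j
    · exact mul_self_nonneg _
  have hνsum : (∑ j, (ν j).natAbs) ≤ (∑ j, (ℓ₀ j).natAbs) + (∑ j, (ℓ₁ j).natAbs) := by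
    rw [← Finset.sum_add_distrib]
    refine Finset.sum_le_sum fun j _ => ?_
    by_cases hc : (ℓ₁ j).natAbs ≤ (ℓ₀ j).natAbs <;> simp [hν, hc] <;> omega
  have hs0le : (∑ j, (ℓ₀ j).natAbs) ≤ ∑ j, (ν j).natAbs := Finset.sum_le_sum fun j _ => hν0 j
  have hs1le : (∑ j, (ℓ₁ j).natAbs) ≤ ∑ j, (ν j).natAbs := Finset.sum_le_sum fun j _ => hν1 j
  have est0 := ascent n σ C₁ hC₁ h ((∑ j, (ν j).natAbs) - (∑ j, (ℓ₀ j).natAbs))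
    ℓ₀ ν horth0 hν0 (by omega)
  have est1 := ascent n σ C₁ hC₁ h ((∑ j, (ν j).natAbs) - (∑ j, (ℓ₁ j).natAbs))
    ℓ₁ ν horth1 hν1 (by omega)
  have tri : ‖σ ℓ₀ - σ ℓ₁‖ ≤ ‖σ ν - σ ℓ₀‖ + ‖σ ν - σ ℓ₁‖ := by
    have hsplit : σ ℓ₀ - σ ℓ₁ = -(σ ν - σ ℓ₀) + (σ ν - σ ℓ₁) := by ring
    rw [hsplit]
    refine le_trans (norm_add_le _ _) ?_
    rw [norm_neg]
  set s0 : ℝ := ((∑ j, (ℓ₀ j).natAbs : ℕ) : ℝ) with hs0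
  set s1 : ℝ := ((∑ j, (ℓ₁ j).natAbs : ℕ) : ℝ) with hs1
  set sv : ℝ := ((∑ j, (ν j).natAbs : ℕ) : ℝ) with hsv
  set A := enorm' (latt ℓ₀) with hA
  set B := enorm' (latt ℓ₁) with hB
  have hA1 : 1 ≤ A := one_le_enorm n ℓ₀ h0
  have hB1 : 1 ≤ B := one_le_enorm n ℓ₁ h1
  have hrat := ratio_bound n hn s0 s1 sv A B hA1 hB1
    (sqrt_le_l1 n ℓ₀) (sqrt_le_l1 n ℓ₁) (l1_le_sqrt n ℓ₀) (l1_le_sqrt n ℓ₁)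
    (by rw [hsv]; positivity) (by rw [hs0, hs1, hsv]; exact_mod_cast hνsum)
  have hlogdiv : Real.log (A / B) = Real.log A - Real.log B :=
    Real.log_div (by linarith) (by linarith)
  set L := |Real.log A - Real.log B| with hL
  have hLnn : 0 ≤ L := abs_nonneg _
  have key : ‖σ ℓ₀ - σ ℓ₁‖ ≤ K * (c0 + L) := by
    have := add_le_add est0 est1
    have hcomb : ‖σ ℓ₀ - σ ℓ₁‖ ≤
        K * (2 * Real.log (1 + sv) - Real.log (1 + s0) - Real.log (1 + s1)) := by
      calc ‖σ ℓ₀ - σ ℓ₁‖ ≤ ‖σ ν - σ ℓ₀‖ + ‖σ ν - σ ℓ₁‖ := tri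
        _ ≤ K * (Real.log (1 + sv) - Real.log (1 + s0))
            + K * (Real.log (1 + sv) - Real.log (1 + s1)) := add_le_add est0 est1
        _ = K * (2 * Real.log (1 + sv) - Real.log (1 + s0) - Real.log (1 + s1)) := by ring
    calc ‖σ ℓ₀ - σ ℓ₁‖ ≤
        K * (2 * Real.log (1 + sv) - Real.log (1 + s0) - Real.log (1 + s1)) := hcomb
      _ ≤ K * (c0 + L) := by
          apply mul_le_mul_of_nonneg_left _ hKpos.le
          rw [hc0, hL]
          linarith [hrat]
  calc ‖σ ℓ₀ - σ ℓ₁‖ ≤ K * (c0 + L) := key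
    _ ≤ K * (c0 + 1) * (1 + L) := by
        have hfac : c0 + L ≤ (c0 + 1) * (1 + L) := by nlinarith [mul_nonneg hc0pos hLnn]
        calc K * (c0 + L) ≤ K * ((c0 + 1) * (1 + L)) :=
              mul_le_mul_of_nonneg_left hfac hKpos.le
          _ = K * (c0 + 1) * (1 + L) := by ring
    _ = K * (c0 + 1) * (1 + |Real.log (A / B)|) := by rw [hlogdiv, ← hL]
end

section
/- Let n ≥ 1, fix j ∈ {1, …, n}, and let σ : ℤ^n → ℂ satisfy the second-difference estimate in the direction e_j: there is C₀ > 0 such that |σ(ℓ+2e_j) − 2σ(ℓ+e_j) + σ(ℓ)| ≤ C₀ ⟨ℓ⟩^{−2} for all ℓ ∈ ℤ^n. Then there exists C > 0 such that for every ℓ ∈ ℤ^n ∖ {0} and every positive integer M with M ≤ |ℓ|/2 one has the discrete Taylor estimate |σ(ℓ + M e_j) − σ(ℓ) − M (σ(ℓ+e_j) − σ(ℓ))| ≤ C M² ⟨ℓ⟩^{−2}. -/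
open scoped BigOperators

/-!
Telescoping twice, `f M - f 0 - M • Δf 0 = ∑_{k<M} ∑_{i<k} Δ²f i`, so the Taylor remainder is
bounded by `M.choose 2` times a bound on the second differences at the points `i < M`. Along the
ray `ℓ + i e_j` with `i ≤ M ≤ |ℓ|/2` the triangle inequality gives `|ℓ + i e_j| ≥ |ℓ|/2`, hence
`⟨ℓ + i e_j⟩⁻² ≤ 4⟨ℓ⟩⁻²`, and one may take `C = 4 C₀`.
-/

open Finset fwdDiff

section TaylorRemainder

variable {G : Type*} [AddCommGroup G]

lemma fwdDiff_iter_two_apply (f : ℕ → G) (i : ℕ) :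
    Δ_[1] ^[2] f i = f (i + 2) - 2 • f (i + 1) + f i := by
  change f (i + 1 + 1) - f (i + 1) - (f (i + 1) - f i) = _
  abel

lemma sub_sub_nsmul_fwdDiff_eq_sum_sum (f : ℕ → G) (M : ℕ) :
    f M - f 0 - M • Δ_[1] f 0 = ∑ k ∈ range M, ∑ i ∈ range k, Δ_[1] ^[2] f i := by
  have telescope (g : ℕ → G) (k : ℕ) : ∑ i ∈ range k, Δ_[1] g i = g k - g 0 :=
    sum_range_sub g k
  calc f M - f 0 - M • Δ_[1] f 0 = ∑ k ∈ range M, (Δ_[1] f k - Δ_[1] f 0) := by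
        rw [sum_sub_distrib, telescope, sum_const, card_range]
    _ = ∑ k ∈ range M, ∑ i ∈ range k, Δ_[1] ^[2] f i := by
        simp only [← telescope (Δ_[1] f)]
        rfl

lemma norm_sub_sub_nsmul_fwdDiff_le {E : Type*} [SeminormedAddCommGroup E] (f : ℕ → E) (M : ℕ)
    {B : ℝ} (hB : ∀ i < M, ‖Δ_[1] ^[2] f i‖ ≤ B) :
    ‖f M - f 0 - M • Δ_[1] f 0‖ ≤ M.choose 2 * B := by
  calc ‖f M - f 0 - M • Δ_[1] f 0‖
      ≤ ∑ k ∈ range M, ∑ i ∈ range k, ‖Δ_[1] ^[2] f i‖ := by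
        rw [sub_sub_nsmul_fwdDiff_eq_sum_sum]
        exact (norm_sum_le _ _).trans (sum_le_sum fun k _ ↦ norm_sum_le _ _)
    _ ≤ ∑ k ∈ range M, ∑ i ∈ range k, B := by
        gcongr with k hk i hi
        exact hB i ((mem_range.1 hi).trans (mem_range.1 hk))
    _ = M.choose 2 * B := by
        simp only [sum_const, card_range, nsmul_eq_mul, ← sum_mul]
        rw [← Nat.cast_sum, sum_range_id, ← Nat.choose_two_right]

end TaylorRemainder

section JapaneseBracket

variable {n : ℕ}

lemma enorm'_eq_norm (x : Fin n → ℝ) :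
    enorm' x = ‖(WithLp.toLp 2 x : EuclideanSpace ℝ (Fin n))‖ := by
  simp [enorm', EuclideanSpace.norm_eq]

lemma jap_rpow_neg_two (ℓ : Fin n → ℤ) : jap ℓ ^ (-2 : ℝ) = (1 + enorm' (latt ℓ) ^ 2)⁻¹ := by
  have hS : 0 ≤ ∑ i, latt ℓ i ^ 2 := sum_nonneg fun i _ ↦ sq_nonneg _
  rw [jap, enorm', Real.rpow_neg (Real.sqrt_nonneg _), Real.rpow_two,
    Real.sq_sqrt (by positivity), Real.sq_sqrt hS]
  rfl

lemma enorm'_latt_nsmul_single (j : Fin n) (i : ℕ) :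
    enorm' (latt (i • Pi.single j 1 : Fin n → ℤ)) = i := by
  simp [enorm', latt, Pi.single_apply]

lemma jap_add_rpow_neg_two_le (ℓ m : Fin n → ℤ) (hm : enorm' (latt m) ≤ enorm' (latt ℓ) / 2) :
    jap (ℓ + m) ^ (-2 : ℝ) ≤ 4 * jap ℓ ^ (-2 : ℝ) := by
  have hlatt : latt (ℓ + m) = latt ℓ + latt m := by ext; simp [latt]
  have hhalf : enorm' (latt ℓ) / 2 ≤ enorm' (latt (ℓ + m)) := by
    have := norm_sub_norm_le (WithLp.toLp 2 (latt ℓ) : EuclideanSpace ℝ (Fin n))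
      (WithLp.toLp 2 (-latt m))
    simp only [enorm'_eq_norm, hlatt, WithLp.toLp_add, WithLp.toLp_neg, norm_neg,
      sub_neg_eq_add] at this hm ⊢
    linarith
  have h0 : 0 ≤ enorm' (latt ℓ) := Real.sqrt_nonneg _
  rw [jap_rpow_neg_two, jap_rpow_neg_two, ← div_eq_mul_inv,
    inv_le_comm₀ (by positivity) (by positivity), inv_div]
  nlinarith

end JapaneseBracket

theorem discrete_taylor_estimate_general (n : ℕ) (j : Fin n)
    (σ : (Fin n → ℤ) → ℂ) (C₀ : ℝ) (hC₀ : 0 < C₀)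
    (h : ∀ ℓ : Fin n → ℤ,
      ‖σ (ℓ + 2 • Pi.single j 1) - 2 * σ (ℓ + Pi.single j 1) + σ ℓ‖
        ≤ C₀ * jap ℓ ^ (-2 : ℝ)) :
    ∃ C > 0, ∀ ℓ : Fin n → ℤ, ℓ ≠ 0 → ∀ M : ℕ, 0 < M →
      (M : ℝ) ≤ enorm' (latt ℓ) / 2 →
      ‖σ (ℓ + M • Pi.single j 1) - σ ℓ - (M : ℂ) * (σ (ℓ + Pi.single j 1) - σ ℓ)‖
        ≤ C * (M : ℝ) ^ 2 * jap ℓ ^ (-2 : ℝ) := by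
  refine ⟨4 * C₀, by positivity, fun ℓ _ M _ hM ↦ ?_⟩
  set e : Fin n → ℤ := Pi.single j 1
  set J := jap ℓ ^ (-2 : ℝ)
  have hsecond : ∀ i < M, ‖Δ_[1] ^[2] (fun k : ℕ ↦ σ (ℓ + k • e)) i‖ ≤ C₀ * (4 * J) := by
    intro i hi
    have hi' : enorm' (latt (i • e)) ≤ enorm' (latt ℓ) / 2 := by
      rw [enorm'_latt_nsmul_single]
      exact le_trans (by exact_mod_cast hi.le) hM
    rw [fwdDiff_iter_two_apply]
    calc _ = ‖σ (ℓ + i • e + 2 • e) - 2 * σ (ℓ + i • e + e) + σ (ℓ + i • e)‖ := by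
          simp only [add_nsmul, one_nsmul, add_assoc, two_nsmul, two_mul]
      _ ≤ C₀ * jap (ℓ + i • e) ^ (-2 : ℝ) := h _
      _ ≤ C₀ * (4 * J) := by gcongr; exact jap_add_rpow_neg_two_le ℓ _ hi'
  have hJ : 0 ≤ J := Real.rpow_nonneg (Real.sqrt_nonneg _) _
  have hchoose : (M.choose 2 : ℝ) ≤ M ^ 2 := by exact_mod_cast Nat.choose_le_pow M 2
  calc _ = ‖σ (ℓ + M • e) - σ (ℓ + 0 • e) - M • Δ_[1] (fun k : ℕ ↦ σ (ℓ + k • e)) 0‖ := by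
        simp [fwdDiff, nsmul_eq_mul]
    _ ≤ M.choose 2 * (C₀ * (4 * J)) := norm_sub_sub_nsmul_fwdDiff_le _ M hsecond
    _ ≤ 4 * C₀ * M ^ 2 * J := by nlinarith [mul_nonneg hC₀.le hJ]

/-- Discrete Taylor estimate: if the second differences of `σ` in the direction `e_j` satisfy
`|Δ_j² σ(ℓ)| ≤ C₀ ⟨ℓ⟩^{-2}`, then for `M ≤ |ℓ|/2` one has
`|σ(ℓ + M e_j) - σ(ℓ) - M Δ_j σ(ℓ)| ≤ C M² ⟨ℓ⟩^{-2}`. -/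
theorem discrete_taylor_estimate (n : ℕ) (hn : 1 ≤ n) (j : Fin n)
    (σ : (Fin n → ℤ) → ℂ) (C₀ : ℝ) (hC₀ : 0 < C₀)
    (h : ∀ ℓ : Fin n → ℤ,
      ‖σ (ℓ + 2 • Pi.single j 1) - 2 * σ (ℓ + Pi.single j 1) + σ ℓ‖
        ≤ C₀ * jap ℓ ^ (-2 : ℝ)) :
    ∃ C > 0, ∀ ℓ : Fin n → ℤ, ℓ ≠ 0 → ∀ M : ℕ, 0 < M →
      (M : ℝ) ≤ enorm' (latt ℓ) / 2 →
      ‖σ (ℓ + M • Pi.single j 1) - σ ℓ - (M : ℂ) * (σ (ℓ + Pi.single j 1) - σ ℓ)‖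
        ≤ C * (M : ℝ) ^ 2 * jap ℓ ^ (-2 : ℝ) :=
  discrete_taylor_estimate_general n j σ C₀ hC₀ h
end

section
/- Let n ≥ 1 and let σ : ℤ^n → ℂ satisfy the toroidal symbol estimates of order 0 and be 0-homogeneous on the lattice, i.e. σ(rℓ) = σ(ℓ) for every ℓ ∈ ℤ^n ∖ {0} and every positive integer r. Let f : ℝ^n ∖ {0} → ℂ be a continuously differentiable function which is 0-homogeneous (f(tξ) = f(ξ) for all t > 0, ξ ≠ 0) and satisfies f(ℓ) = σ(ℓ) for all ℓ ∈ ℤ^n ∖ {0}. Then for every ℓ ∈ ℤ^n ∖ {0} and every j ∈ {1, …, n}, the rescaled first differences converge to the partial derivative of f: lim_{q → ∞, q ∈ ℕ} q (σ(qℓ + e_j) − σ(qℓ)) = ∂_j f(ℓ). -/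
open scoped BigOperators

/-! Since `f` is `0`-homogeneous and extends `σ`, we have `σ(qℓ + e_j) = f(q (ℓ + q⁻¹ e_j)) =
f(ℓ + q⁻¹ e_j)` and `σ(qℓ) = f(ℓ)`, so `q (σ(qℓ + e_j) - σ(qℓ))` is the difference quotient of `f`
at `ℓ` in direction `e_j` with step `1/q`, which tends to `∂_j f(ℓ)`. -/

open Filter Topology

theorem HasFDerivAt.tendsto_nat_smul_sub {E F : Type*} [NormedAddCommGroup E] [NormedSpace ℝ E]
    [NormedAddCommGroup F] [NormedSpace ℝ F] {f : E → F} {f' : E →L[ℝ] F} {x : E}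
    (hf : HasFDerivAt f f' x) (v : E) :
    Tendsto (fun q : ℕ => (q : ℝ) • (f (x + (q : ℝ)⁻¹ • v) - f x)) atTop (𝓝 (f' v)) := by
  have hslope := (hf.hasLineDerivAt v).tendsto_slope_zero_right.comp
    (tendsto_inv_atTop_nhdsGT_zero.comp tendsto_natCast_atTop_atTop)
  simpa only [Function.comp_def, inv_inv] using hslope

theorem latt_injective {n : ℕ} : Function.Injective (latt : (Fin n → ℤ) → Fin n → ℝ) :=
  fun _ _ h => funext fun i => Int.cast_injective (congrFun h i)

@[simp]
theorem latt_zero {n : ℕ} : latt (0 : Fin n → ℤ) = 0 := by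
  funext i
  simp [latt]

theorem latt_ne_zero {n : ℕ} {ℓ : Fin n → ℤ} (hℓ : ℓ ≠ 0) : latt ℓ ≠ 0 :=
  fun h => hℓ (latt_injective (h.trans latt_zero.symm))

theorem latt_nsmul_add_single {n : ℕ} (ℓ : Fin n → ℤ) (j : Fin n) {q : ℕ} (hq : q ≠ 0) :
    latt ((q : ℤ) • ℓ + Pi.single j 1) = (q : ℝ) • (latt ℓ + (q : ℝ)⁻¹ • Pi.single j 1) := by
  have hq' : (q : ℝ) ≠ 0 := Nat.cast_ne_zero.mpr hq
  funext i
  rcases eq_or_ne i j with rfl | hij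
  · simp [latt, mul_add, hq']
  · simp [latt, hij]

theorem eventually_eq_apply_add_inv_smul_single {n : ℕ} (σ : (Fin n → ℤ) → ℂ)
    (f : (Fin n → ℝ) → ℂ)
    (hfh : ∀ t : ℝ, 0 < t → ∀ ξ : Fin n → ℝ, ξ ≠ 0 → f (t • ξ) = f ξ)
    (hfσ : ∀ ℓ : Fin n → ℤ, ℓ ≠ 0 → f (latt ℓ) = σ ℓ) {ℓ : Fin n → ℤ} (hℓ : ℓ ≠ 0) (j : Fin n) :
    ∀ᶠ q : ℕ in atTop,
      σ ((q : ℤ) • ℓ + Pi.single j 1) = f (latt ℓ + (q : ℝ)⁻¹ • Pi.single j 1) := by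
  have hpoints : Tendsto (fun q : ℕ => latt ℓ + (q : ℝ)⁻¹ • (Pi.single j 1 : Fin n → ℝ)) atTop
      (𝓝 (latt ℓ)) := by
    simpa using tendsto_const_nhds.add
      (((tendsto_inv_atTop_zero (𝕜 := ℝ)).comp tendsto_natCast_atTop_atTop).smul_const
        (Pi.single j 1 : Fin n → ℝ))
  filter_upwards [hpoints.eventually_ne (latt_ne_zero hℓ), eventually_ne_atTop 0] with q hne hq
  have hqpos : (0 : ℝ) < q := Nat.cast_pos.mpr (Nat.pos_of_ne_zero hq)
  have hlatt := latt_nsmul_add_single ℓ j hq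
  have hlattice_ne : (q : ℤ) • ℓ + Pi.single j 1 ≠ 0 := by
    rintro h
    rw [h, latt_zero] at hlatt
    exact hne ((smul_eq_zero.mp hlatt.symm).resolve_left hqpos.ne')
  rw [← hfσ _ hlattice_ne, hlatt, hfh _ hqpos _ hne]

theorem rescaled_differences_tendsto_deriv_general (n : ℕ)
    (σ : (Fin n → ℤ) → ℂ)
    (hhom : ∀ ℓ : Fin n → ℤ, ℓ ≠ 0 → ∀ r : ℕ, 0 < r → σ ((r : ℤ) • ℓ) = σ ℓ)
    (f : (Fin n → ℝ) → ℂ)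
    (hf : ContDiffOn ℝ 1 f {ξ : Fin n → ℝ | ξ ≠ 0})
    (hfh : ∀ t : ℝ, 0 < t → ∀ ξ : Fin n → ℝ, ξ ≠ 0 → f (t • ξ) = f ξ)
    (hfσ : ∀ ℓ : Fin n → ℤ, ℓ ≠ 0 → f (latt ℓ) = σ ℓ) :
    ∀ ℓ : Fin n → ℤ, ℓ ≠ 0 → ∀ j : Fin n,
      Filter.Tendsto
        (fun q : ℕ => (q : ℂ) * (σ ((q : ℤ) • ℓ + Pi.single j 1) - σ ((q : ℤ) • ℓ)))
        Filter.atTop (nhds (fderiv ℝ f (latt ℓ) (Pi.single j 1))) := by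
  intro ℓ hℓ j
  have hdiff : DifferentiableAt ℝ f (latt ℓ) :=
    (hf.contDiffAt (isOpen_ne.mem_nhds (latt_ne_zero hℓ))).differentiableAt one_ne_zero
  refine (hdiff.hasFDerivAt.tendsto_nat_smul_sub _).congr' ?_
  filter_upwards [eventually_eq_apply_add_inv_smul_single σ f hfh hfσ hℓ j,
    eventually_gt_atTop 0] with q hshift hq
  rw [hshift, hhom ℓ hℓ q hq, ← hfσ ℓ hℓ, Complex.real_smul, Complex.ofReal_natCast]

/-- For a toroidal symbol `σ` of order `0` which is `0`-homogeneous on the lattice, with a `C¹`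
`0`-homogeneous extension `f` on `ℝ^n ∖ {0}`, the rescaled first differences
`q (σ(qℓ + e_j) - σ(qℓ))` converge to the partial derivative `∂_j f(ℓ)` as `q → ∞`. -/
theorem rescaled_differences_tendsto_deriv (n : ℕ) (hn : 1 ≤ n)
    (σ : (Fin n → ℤ) → ℂ) (hσ : ToroidalSymbol 0 σ)
    (hhom : ∀ ℓ : Fin n → ℤ, ℓ ≠ 0 → ∀ r : ℕ, 0 < r → σ ((r : ℤ) • ℓ) = σ ℓ)
    (f : (Fin n → ℝ) → ℂ)
    (hf : ContDiffOn ℝ 1 f {ξ : Fin n → ℝ | ξ ≠ 0})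
    (hfh : ∀ t : ℝ, 0 < t → ∀ ξ : Fin n → ℝ, ξ ≠ 0 → f (t • ξ) = f ξ)
    (hfσ : ∀ ℓ : Fin n → ℤ, ℓ ≠ 0 → f (latt ℓ) = σ ℓ) :
    ∀ ℓ : Fin n → ℤ, ℓ ≠ 0 → ∀ j : Fin n,
      Filter.Tendsto
        (fun q : ℕ => (q : ℂ) * (σ ((q : ℤ) • ℓ + Pi.single j 1) - σ ((q : ℤ) • ℓ)))
        Filter.atTop (nhds (fderiv ℝ f (latt ℓ) (Pi.single j 1))) :=
  rescaled_differences_tendsto_deriv_general n σ hhom f hf hfh hfσ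
end

section
/- Let n ≥ 1, m ∈ ℂ, and let f : ℝ^n ∖ {0} → ℂ be a smooth function which is m-homogeneous, i.e. f(tξ) = t^m f(ξ) for all t > 0 and ξ ≠ 0. Define σ : ℤ^n → ℂ by σ(ℓ) = f(ℓ) for ℓ ≠ 0 and σ(0) = 0. Then σ satisfies the toroidal symbol estimates of order Re m: for every multi-index α ∈ ℕ^n there exists C > 0 such that |Δ^α σ(ℓ)| ≤ C ⟨ℓ⟩^{Re m − |α|} for all ℓ ∈ ℤ^n. -/
open scoped BigOperators

namespace ToroidalAux

variable {n : ℕ}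

noncomputable def ee (j : Fin n) : Fin n → ℝ := Pi.single j 1

lemma norm_ee (j : Fin n) : ‖ee j‖ = 1 := by
  simp [ee, Pi.norm_single]

lemma norm_add_ee_lower (x : Fin n → ℝ) (j : Fin n) : ‖x‖ - 1 ≤ ‖x + ee j‖ := by
  have h : ‖(x + ee j) - ee j‖ ≤ ‖x + ee j‖ + ‖ee j‖ := norm_sub_le _ _
  simp only [add_sub_cancel_right, norm_ee] at h
  linarith

lemma norm_add_ee_upper (x : Fin n → ℝ) (j : Fin n) : ‖x + ee j‖ ≤ ‖x‖ + 1 := by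
  have h := norm_add_le x (ee j)
  rwa [norm_ee] at h

noncomputable def Tdiff {F : Type*} [AddCommGroup F] (j : Fin n) (g : (Fin n → ℝ) → F) :
    (Fin n → ℝ) → F := fun x => g (x + ee j) - g x

noncomputable def TdiffL {F : Type*} [AddCommGroup F] : List (Fin n) → ((Fin n → ℝ) → F) → ((Fin n → ℝ) → F)
  | [], g => g
  | j :: L, g => TdiffL L (Tdiff j g)

def ZdiffL : List (Fin n) → ((Fin n → ℤ) → ℂ) → ((Fin n → ℤ) → ℂ)
  | [], σ => σ
  | j :: L, σ => ZdiffL L (Delta j σ)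

lemma Tdiff_comm {F : Type*} [AddCommGroup F] (j k : Fin n) (g : (Fin n → ℝ) → F) :
    Tdiff j (Tdiff k g) = Tdiff k (Tdiff j g) := by
  funext x
  simp only [Tdiff]
  rw [add_right_comm]
  abel

lemma TdiffL_Tdiff_comm {F : Type*} [AddCommGroup F] (L : List (Fin n)) (j : Fin n)
    (g : (Fin n → ℝ) → F) : TdiffL L (Tdiff j g) = Tdiff j (TdiffL L g) := by
  induction L generalizing g with
  | nil => rfl
  | cons k L ih =>
    simp only [TdiffL]
    rw [Tdiff_comm, ih]

lemma TdiffL_congr {F : Type*} [AddCommGroup F] (L : List (Fin n)) :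
    ∀ (r : ℝ) (g₁ g₂ : (Fin n → ℝ) → F), (∀ y, r ≤ ‖y‖ → g₁ y = g₂ y) →
      ∀ x, r + L.length ≤ ‖x‖ → TdiffL L g₁ x = TdiffL L g₂ x := by
  induction L with
  | nil => intro r g₁ g₂ h x hx; exact h x (by simpa using hx)
  | cons j L ih =>
    intro r g₁ g₂ h x hx
    simp only [TdiffL]
    refine ih (r + 1) _ _ (fun y hy => ?_) x ?_
    · have h1 : r ≤ ‖y + ee j‖ := by
        have := norm_add_ee_lower y j
        linarith
      simp only [Tdiff, h y (by linarith), h _ h1]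
    · push_cast [List.length_cons] at hx ⊢; linarith

lemma TdiffL_apply (L : List (Fin n)) :
    ∀ (h : (Fin n → ℝ) → ((Fin n → ℝ) →L[ℝ] ℂ)) (v : Fin n → ℝ) (x : Fin n → ℝ),
      TdiffL L (fun y => h y v) x = (TdiffL L h x) v := by
  induction L with
  | nil => intro h v x; rfl
  | cons j L ih =>
    intro h v x
    simp only [TdiffL]
    have : (Tdiff j fun y => h y v) = fun y => (Tdiff j h y) v := by
      funext y; simp [Tdiff]
    rw [this, ih]

end ToroidalAux

namespace ToroidalAux
variable {n : ℕ}

lemma ZdiffL_append (L₁ L₂ : List (Fin n)) (σ : (Fin n → ℤ) → ℂ) :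
    ZdiffL (L₁ ++ L₂) σ = ZdiffL L₂ (ZdiffL L₁ σ) := by
  induction L₁ generalizing σ with
  | nil => rfl
  | cons j L ih =>
    simp only [List.cons_append, ZdiffL]
    exact ih _

lemma Delta_iterate (j : Fin n) (k : ℕ) (σ : (Fin n → ℤ) → ℂ) :
    (Delta j)^[k] σ = ZdiffL (List.replicate k j) σ := by
  induction k generalizing σ with
  | zero => rfl
  | succ k ih =>
    rw [Function.iterate_succ_apply, List.replicate_succ]
    simp only [ZdiffL, ih]

lemma foldr_comp_zdiff (ls : List (List (Fin n))) (σ : (Fin n → ℤ) → ℂ) :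
    (ls.map (fun l (τ : (Fin n → ℤ) → ℂ) => ZdiffL l τ)).foldr (· ∘ ·) id σ
      = ZdiffL (ls.reverse.flatten) σ := by
  induction ls generalizing σ with
  | nil => rfl
  | cons l ls ih =>
    simp only [List.map_cons, List.foldr_cons, Function.comp_apply, List.reverse_cons,
      List.flatten_append, ZdiffL_append, ih]
    simp [ZdiffL_append]

def Lof (α : Fin n → ℕ) : List (Fin n) :=
  (List.ofFn fun j => List.replicate (α j) j).reverse.flatten

lemma deltaPow_eq_zdiffL (α : Fin n → ℕ) (σ : (Fin n → ℤ) → ℂ) :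
    DeltaPow α σ = ZdiffL (Lof α) σ := by
  have h : (List.ofFn fun j : Fin n => (Delta j)^[α j])
      = (List.ofFn fun j => List.replicate (α j) j).map
          (fun l (τ : (Fin n → ℤ) → ℂ) => ZdiffL l τ) := by
    rw [List.map_ofFn]
    congr 1
    funext j
    funext τ
    exact Delta_iterate j (α j) τ
  rw [DeltaPow, h, foldr_comp_zdiff, Lof]

lemma Lof_length (α : Fin n → ℕ) : (Lof α).length = ∑ j, α j := by
  simp [Lof, List.length_flatten, List.map_reverse, List.sum_reverse,
    Function.comp_def, List.sum_ofFn]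

lemma latt_add_single (ℓ : Fin n → ℤ) (j : Fin n) :
    latt (ℓ + Pi.single j 1) = latt ℓ + ee j := by
  funext i
  by_cases h : i = j <;> simp [latt, ee, h, Pi.single_apply]

lemma zdiffL_eq (L : List (Fin n)) :
    ∀ (r : ℝ) (σ : (Fin n → ℤ) → ℂ) (g : (Fin n → ℝ) → ℂ),
      (∀ ℓ', r ≤ ‖latt ℓ'‖ → σ ℓ' = g (latt ℓ')) →
      ∀ ℓ, r + L.length ≤ ‖latt ℓ‖ → ZdiffL L σ ℓ = TdiffL L g (latt ℓ) := by
  induction L with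
  | nil => intro r σ g h ℓ hℓ; exact h ℓ (by simpa using hℓ)
  | cons j L ih =>
    intro r σ g h ℓ hℓ
    simp only [ZdiffL, TdiffL]
    refine ih (r + 1) _ _ (fun ℓ' hℓ' => ?_) ℓ ?_
    · simp only [Delta, Tdiff, latt_add_single]
      have hb : r ≤ ‖latt (ℓ' + Pi.single j 1)‖ := by
        rw [latt_add_single]
        have := norm_add_ee_lower (latt ℓ') j
        linarith
      rw [h ℓ' (by linarith), h _ hb, latt_add_single]
    · push_cast [List.length_cons] at hℓ ⊢; linarith

end ToroidalAux

namespace ToroidalAux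
variable {n : ℕ}

lemma hasFDerivAt_translate {F : Type*} [NormedAddCommGroup F] [NormedSpace ℝ F]
    {g : (Fin n → ℝ) → F} {c y : Fin n → ℝ} (h : DifferentiableAt ℝ g (y + c)) :
    HasFDerivAt (fun z => g (z + c)) (fderiv ℝ g (y + c)) y := by
  have h2 : HasFDerivAt (fun z : Fin n → ℝ => z + c)
      (ContinuousLinearMap.id ℝ (Fin n → ℝ)) y := (hasFDerivAt_id y).add_const c
  have h3 := h.hasFDerivAt.comp y h2
  exact h3

lemma differentiableAt_Tdiff {F : Type*} [NormedAddCommGroup F] [NormedSpace ℝ F]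
    {g : (Fin n → ℝ) → F} (j : Fin n) {y : Fin n → ℝ}
    (h1 : DifferentiableAt ℝ g (y + ee j)) (h2 : DifferentiableAt ℝ g y) :
    DifferentiableAt ℝ (Tdiff j g) y :=
  ((hasFDerivAt_translate h1).sub h2.hasFDerivAt).differentiableAt

lemma fderiv_Tdiff {F : Type*} [NormedAddCommGroup F] [NormedSpace ℝ F]
    {g : (Fin n → ℝ) → F} (j : Fin n) {y : Fin n → ℝ}
    (h1 : DifferentiableAt ℝ g (y + ee j)) (h2 : DifferentiableAt ℝ g y) :
    fderiv ℝ (Tdiff j g) y = Tdiff j (fun z => fderiv ℝ g z) y :=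
  ((hasFDerivAt_translate h1).sub h2.hasFDerivAt).fderiv

lemma TdiffL_hasFDerivAt {F : Type*} [NormedAddCommGroup F] [NormedSpace ℝ F]
    (L : List (Fin n)) :
    ∀ (r : ℝ) (g : (Fin n → ℝ) → F),
      (∀ y, r ≤ ‖y‖ → DifferentiableAt ℝ g y) → ∀ x, r + L.length ≤ ‖x‖ →
      HasFDerivAt (TdiffL L g) (TdiffL L (fun y => fderiv ℝ g y) x) x := by
  induction L with
  | nil => intro r g hg x hx; exact (hg x (by simpa using hx)).hasFDerivAt
  | cons j L ih =>
    intro r g hg x hx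
    have hg' : ∀ y, r + 1 ≤ ‖y‖ → DifferentiableAt ℝ (Tdiff j g) y := fun y hy => by
      have h1 : r ≤ ‖y + ee j‖ := by have := norm_add_ee_lower y j; linarith
      exact differentiableAt_Tdiff j (hg _ h1) (hg y (by linarith))
    have hx' : r + 1 + (L.length : ℝ) ≤ ‖x‖ := by
      push_cast [List.length_cons] at hx; linarith
    have h := ih (r + 1) (Tdiff j g) hg' x hx'
    have heq : TdiffL L (fun y => fderiv ℝ (Tdiff j g) y) x
        = TdiffL L (Tdiff j fun y => fderiv ℝ g y) x := by
      refine TdiffL_congr L (r + 1) _ _ (fun y hy => ?_) x hx'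
      have h1 : r ≤ ‖y + ee j‖ := by have := norm_add_ee_lower y j; linarith
      exact fderiv_Tdiff j (hg _ h1) (hg y (by linarith))
    simp only [TdiffL]
    rw [← heq]
    exact h

def Homog (μ : ℂ) (g : (Fin n → ℝ) → ℂ) : Prop :=
  ∀ t : ℝ, 0 < t → ∀ ξ : Fin n → ℝ, ξ ≠ 0 → g (t • ξ) = (t : ℂ) ^ μ * g ξ

lemma isOpen_U : IsOpen {ξ : Fin n → ℝ | ξ ≠ 0} := isOpen_compl_singleton

lemma diffAt {g : (Fin n → ℝ) → ℂ} (hg : ContDiffOn ℝ (⊤ : ℕ∞) g {ξ : Fin n → ℝ | ξ ≠ 0})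
    {y : Fin n → ℝ} (hy : y ≠ 0) : DifferentiableAt ℝ g y :=
  (hg.differentiableOn (by simp)).differentiableAt (isOpen_U.mem_nhds hy)

lemma homog_fderiv_contDiffOn {g : (Fin n → ℝ) → ℂ}
    (hg : ContDiffOn ℝ (⊤ : ℕ∞) g {ξ : Fin n → ℝ | ξ ≠ 0}) (j : Fin n) :
    ContDiffOn ℝ (⊤ : ℕ∞) (fun ξ => fderiv ℝ g ξ (ee j)) {ξ : Fin n → ℝ | ξ ≠ 0} := by
  have h1 : ContDiffOn ℝ (⊤ : ℕ∞) (fderiv ℝ g) {ξ : Fin n → ℝ | ξ ≠ 0} :=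
    hg.fderiv_of_isOpen isOpen_U (by simp)
  exact (ContinuousLinearMap.apply ℝ ℂ (ee j)).contDiff.comp_contDiffOn h1

lemma homog_fderiv {μ : ℂ} {g : (Fin n → ℝ) → ℂ}
    (hg : ContDiffOn ℝ (⊤ : ℕ∞) g {ξ : Fin n → ℝ | ξ ≠ 0}) (hh : Homog μ g) (j : Fin n) :
    Homog (μ - 1) (fun ξ => fderiv ℝ g ξ (ee j)) := by
  intro t ht ξ hξ
  have ht0 : (t : ℂ) ≠ 0 := by exact_mod_cast ne_of_gt ht
  have htξ : t • ξ ≠ 0 := smul_ne_zero (ne_of_gt ht) hξ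
  have hA : DifferentiableAt ℝ g (t • ξ) := diffAt hg htξ
  have hB : DifferentiableAt ℝ g ξ := diffAt hg hξ
  have hs : HasFDerivAt (fun x : Fin n → ℝ => t • x)
      (t • ContinuousLinearMap.id ℝ (Fin n → ℝ)) ξ := by
    simpa using (t • ContinuousLinearMap.id ℝ (Fin n → ℝ)).hasFDerivAt (x := ξ)
  have H1 : HasFDerivAt (fun x => g (t • x))
      ((fderiv ℝ g (t • ξ)).comp (t • ContinuousLinearMap.id ℝ (Fin n → ℝ))) ξ :=
    (hA.hasFDerivAt).comp ξ hs
  have H2 : HasFDerivAt (fun x => (t : ℂ) ^ μ * g x) (((t : ℂ) ^ μ) • fderiv ℝ g ξ) ξ :=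
    hB.hasFDerivAt.const_mul _
  have heq : (fun x => (t : ℂ) ^ μ * g x) =ᶠ[nhds ξ] fun x => g (t • x) := by
    filter_upwards [isOpen_U.mem_nhds hξ] with x hx
    exact (hh t ht x hx).symm
  have huniq := (H1.congr_of_eventuallyEq heq).unique H2
  have happ := congrArg (fun A : (Fin n → ℝ) →L[ℝ] ℂ => A (ee j)) huniq
  simp only [ContinuousLinearMap.coe_comp', Function.comp_apply,
    ContinuousLinearMap.smul_apply, ContinuousLinearMap.coe_id', id_eq,
    ContinuousLinearMap.map_smul] at happ
  rw [Complex.cpow_sub _ _ ht0, Complex.cpow_one]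
  rw [smul_eq_mul] at happ
  rw [Complex.real_smul] at happ
  field_simp
  linear_combination happ

lemma homog_bound {μ : ℂ} {g : (Fin n → ℝ) → ℂ}
    (hg : ContinuousOn g {ξ : Fin n → ℝ | ξ ≠ 0}) (hh : Homog μ g) :
    ∃ C > 0, ∀ ξ : Fin n → ℝ, 1 ≤ ‖ξ‖ → ‖g ξ‖ ≤ C * ‖ξ‖ ^ μ.re := by
  have hsub : Metric.sphere (0 : Fin n → ℝ) 1 ⊆ {ξ : Fin n → ℝ | ξ ≠ 0} := by
    intro x hx
    simp only [Metric.mem_sphere, dist_zero_right] at hx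
    intro h0
    rw [h0] at hx
    simp at hx
  obtain ⟨C₀, hC₀⟩ := (isCompact_sphere (0 : Fin n → ℝ) 1).exists_bound_of_continuousOn
    (hg.mono hsub)
  refine ⟨max C₀ 1, lt_of_lt_of_le one_pos (le_max_right _ _), fun ξ hξ => ?_⟩
  have ht : (0 : ℝ) < ‖ξ‖ := lt_of_lt_of_le one_pos hξ
  set ω := ‖ξ‖⁻¹ • ξ with hω
  have hωs : ω ∈ Metric.sphere (0 : Fin n → ℝ) 1 := by
    simp [hω, norm_smul, abs_of_pos (inv_pos.mpr ht), inv_mul_cancel₀ (ne_of_gt ht)]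
  have hω0 : ω ≠ 0 := hsub hωs
  have hξω : ξ = ‖ξ‖ • ω := by
    rw [hω, smul_smul, mul_inv_cancel₀ (ne_of_gt ht), one_smul]
  have hgξ : g ξ = ((‖ξ‖ : ℝ) : ℂ) ^ μ * g ω := by
    conv_lhs => rw [hξω]
    exact hh ‖ξ‖ ht ω hω0
  rw [hgξ, norm_mul]
  have hnorm : ‖((‖ξ‖ : ℝ) : ℂ) ^ μ‖ = ‖ξ‖ ^ μ.re := by
    rw [Complex.norm_cpow_eq_rpow_re_of_pos ht]
  rw [hnorm]
  have hgω : ‖g ω‖ ≤ max C₀ 1 := le_trans (hC₀ ω hωs) (le_max_left _ _)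
  calc ‖ξ‖ ^ μ.re * ‖g ω‖ ≤ ‖ξ‖ ^ μ.re * max C₀ 1 :=
        mul_le_mul_of_nonneg_left hgω (Real.rpow_nonneg (norm_nonneg ξ) _)
    _ = max C₀ 1 * ‖ξ‖ ^ μ.re := mul_comm _ _

lemma rpow_comp {a b c p : ℝ} (ha : 0 < a) (hb : 0 < b) (hc : 1 ≤ c)
    (h1 : a ≤ c * b) (h2 : b ≤ c * a) : a ^ p ≤ c ^ |p| * b ^ p := by
  have hc0 : (0 : ℝ) < c := lt_of_lt_of_le one_pos hc
  rcases le_or_gt 0 p with hp | hp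
  · rw [abs_of_nonneg hp]
    calc a ^ p ≤ (c * b) ^ p := Real.rpow_le_rpow ha.le h1 hp
      _ = c ^ p * b ^ p := Real.mul_rpow hc0.le hb.le
  · rw [abs_of_neg hp]
    have hba : b / c ≤ a := by
      rw [div_le_iff₀ hc0]
      linarith [mul_comm c a]
    have hbc : (0 : ℝ) < b / c := by positivity
    calc a ^ p ≤ (b / c) ^ p := Real.rpow_le_rpow_of_nonpos hbc hba hp.le
      _ = b ^ p / c ^ p := Real.div_rpow hb.le hc0.le p
      _ = c ^ (-p) * b ^ p := by
        rw [Real.rpow_neg hc0.le]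
        field_simp

end ToroidalAux

namespace ToroidalAux
variable {n : ℕ}

lemma main_estimate (L : List (Fin n)) :
    ∀ (μ : ℂ) (g : (Fin n → ℝ) → ℂ),
      ContDiffOn ℝ (⊤ : ℕ∞) g {ξ : Fin n → ℝ | ξ ≠ 0} → Homog μ g →
      ∃ C > 0, ∀ x : Fin n → ℝ, (L.length : ℝ) + 1 ≤ ‖x‖ →
        ‖TdiffL L g x‖ ≤ C * ‖x‖ ^ (μ.re - L.length) := by
  induction L with
  | nil =>
    intro μ g hg hh
    obtain ⟨C, hC, hb⟩ := homog_bound hg.continuousOn hh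
    exact ⟨C, hC, fun x hx => by simpa [TdiffL] using hb x (by simpa using hx)⟩
  | cons j L ih =>
    intro μ g hg hh
    obtain ⟨C₁, hC₁, hb₁⟩ := ih (μ - 1) (fun ξ => fderiv ℝ g ξ (ee j))
      (homog_fderiv_contDiffOn hg j) (homog_fderiv hg hh j)
    set p : ℝ := μ.re - 1 - L.length with hpdef
    refine ⟨C₁ * 2 ^ |p|, by positivity, fun x hx => ?_⟩
    push_cast [List.length_cons] at hx
    have hlen : (0 : ℝ) ≤ L.length := Nat.cast_nonneg _
    have hx1 : (1 : ℝ) ≤ ‖x‖ := by linarith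
    have hdiffg : ∀ y : Fin n → ℝ, (1 : ℝ) ≤ ‖y‖ → DifferentiableAt ℝ g y := by
      intro y hy
      refine diffAt hg fun h0 => ?_
      rw [h0] at hy; simp at hy; linarith
    -- norms along the segment
    have hseg : ∀ s : ℝ, s ∈ Set.Icc (0:ℝ) 1 →
        ‖x‖ - 1 ≤ ‖x + s • ee j‖ ∧ ‖x + s • ee j‖ ≤ ‖x‖ + 1 := by
      intro s hs
      have hns : ‖s • ee j‖ ≤ 1 := by
        rw [norm_smul, norm_ee, Real.norm_eq_abs, mul_one, abs_of_nonneg hs.1]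
        exact hs.2
      constructor
      · have h := norm_sub_le (x + s • ee j) (s • ee j)
        simp only [add_sub_cancel_right] at h
        linarith
      · have h := norm_add_le x (s • ee j)
        linarith
    -- derivative of φ
    have key : ∀ s ∈ Set.Icc (0:ℝ) 1,
        HasDerivWithinAt (fun s : ℝ => TdiffL L g (x + s • ee j))
          (TdiffL L (fun ξ => fderiv ℝ g ξ (ee j)) (x + s • ee j)) (Set.Icc 0 1) s := by
      intro s hs
      have hxs : (1 : ℝ) + L.length ≤ ‖x + s • ee j‖ := by
        have := (hseg s hs).1; linarith
      have hF := TdiffL_hasFDerivAt L 1 g hdiffg (x + s • ee j) hxs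
      have hcurve : HasDerivAt (fun s : ℝ => x + s • ee j) (ee j) s := by
        simpa using ((hasDerivAt_id s).smul_const (ee j)).const_add x
      have hcomp := hF.comp_hasDerivAt s hcurve
      have hap := TdiffL_apply L (fun y => fderiv ℝ g y) (ee j) (x + s • ee j)
      rw [hap]
      exact hcomp.hasDerivWithinAt
    -- bound on the derivative
    have bound : ∀ s ∈ Set.Ico (0:ℝ) 1,
        ‖TdiffL L (fun ξ => fderiv ℝ g ξ (ee j)) (x + s • ee j)‖ ≤ C₁ * 2 ^ |p| * ‖x‖ ^ p := by
      intro s hs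
      have hs' : s ∈ Set.Icc (0:ℝ) 1 := ⟨hs.1, hs.2.le⟩
      have h1 := (hseg s hs').1
      have h2 := (hseg s hs').2
      have hxs : (L.length : ℝ) + 1 ≤ ‖x + s • ee j‖ := by linarith
      have hb := hb₁ (x + s • ee j) hxs
      have hexp : (μ - 1).re - L.length = p := by
        simp [hpdef, Complex.sub_re, Complex.one_re]
      rw [hexp] at hb
      have hxs0 : (0 : ℝ) < ‖x + s • ee j‖ := by linarith
      have hcomp : ‖x + s • ee j‖ ^ p ≤ 2 ^ |p| * ‖x‖ ^ p := by
        refine rpow_comp hxs0 (by linarith) (by norm_num) (by linarith) (by linarith)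
      calc ‖TdiffL L (fun ξ => fderiv ℝ g ξ (ee j)) (x + s • ee j)‖
          ≤ C₁ * ‖x + s • ee j‖ ^ p := hb
        _ ≤ C₁ * (2 ^ |p| * ‖x‖ ^ p) := mul_le_mul_of_nonneg_left hcomp hC₁.le
        _ = C₁ * 2 ^ |p| * ‖x‖ ^ p := by ring
    have hmvt := norm_image_sub_le_of_norm_deriv_le_segment' key bound 1 ⟨zero_le_one, le_refl 1⟩
    -- conclude
    simp only [one_smul, zero_smul, add_zero] at hmvt
    have hrw : TdiffL (j :: L) g x = TdiffL L g (x + ee j) - TdiffL L g x := by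
      simp only [TdiffL]
      rw [TdiffL_Tdiff_comm]
      rfl
    have hexp2 : μ.re - ((j :: L).length : ℝ) = p := by
      push_cast [List.length_cons]
      simp only [hpdef]; ring
    rw [hrw, hexp2]
    calc ‖TdiffL L g (x + ee j) - TdiffL L g x‖ ≤ C₁ * 2 ^ |p| * ‖x‖ ^ p * (1 - 0) := hmvt
      _ = C₁ * 2 ^ |p| * ‖x‖ ^ p := by ring

end ToroidalAux

namespace ToroidalAux
variable {n : ℕ}

lemma one_le_jap (ℓ : Fin n → ℤ) : 1 ≤ jap ℓ := by
  have h : Real.sqrt 1 ≤ jap ℓ := by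
    rw [jap]
    refine Real.sqrt_le_sqrt ?_
    have := Finset.sum_nonneg (fun i (_ : i ∈ Finset.univ) => sq_nonneg ((ℓ i : ℝ)))
    linarith
  simpa [Real.sqrt_one] using h

lemma jap_pos (ℓ : Fin n → ℤ) : 0 < jap ℓ := lt_of_lt_of_le one_pos (one_le_jap ℓ)

lemma norm_latt_le_jap (ℓ : Fin n → ℤ) : ‖latt ℓ‖ ≤ jap ℓ := by
  rw [pi_norm_le_iff_of_nonneg (jap_pos ℓ).le]
  intro i
  simp only [latt]
  rw [Real.norm_eq_abs, jap, show |((ℓ i : ℝ))| = Real.sqrt ((ℓ i : ℝ)^2) by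
    rw [Real.sqrt_sq_eq_abs]]
  refine Real.sqrt_le_sqrt ?_
  have h : ((ℓ i : ℝ))^2 ≤ ∑ x, ((ℓ x : ℝ))^2 :=
    Finset.single_le_sum (f := fun i => ((ℓ i : ℝ))^2)
      (fun i _ => sq_nonneg _) (Finset.mem_univ i)
  linarith

lemma jap_le_sqrt_mul (ℓ : Fin n → ℤ) (h : 1 ≤ ‖latt ℓ‖) :
    jap ℓ ≤ Real.sqrt (1 + n) * ‖latt ℓ‖ := by
  have hsum : ∑ i, ((ℓ i : ℝ))^2 ≤ n * ‖latt ℓ‖^2 := by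
    calc ∑ i, ((ℓ i : ℝ))^2 ≤ ∑ _i : Fin n, ‖latt ℓ‖^2 := by
          refine Finset.sum_le_sum fun i _ => ?_
          have := norm_le_pi_norm (latt ℓ) i
          have h0 : |((ℓ i : ℝ))| ≤ ‖latt ℓ‖ := by
            simpa [latt, Real.norm_eq_abs] using this
          calc ((ℓ i : ℝ))^2 = |((ℓ i : ℝ))|^2 := (sq_abs _).symm
            _ ≤ ‖latt ℓ‖^2 := by
                exact pow_le_pow_left₀ (abs_nonneg _) h0 2
      _ = n * ‖latt ℓ‖^2 := by simp [Finset.sum_const, nsmul_eq_mul]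
  have h1 : (1:ℝ) ≤ ‖latt ℓ‖^2 := by nlinarith
  have h2 : 1 + ∑ i, ((ℓ i : ℝ))^2 ≤ (1 + n) * ‖latt ℓ‖^2 := by
    have hn : (0:ℝ) ≤ n := Nat.cast_nonneg _
    nlinarith
  rw [jap]
  calc Real.sqrt (1 + ∑ i, ((ℓ i : ℝ))^2) ≤ Real.sqrt ((1 + n) * ‖latt ℓ‖^2) :=
        Real.sqrt_le_sqrt h2
    _ = Real.sqrt (1 + n) * ‖latt ℓ‖ := by
        rw [Real.sqrt_mul (by positivity), Real.sqrt_sq (norm_nonneg _)]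

end ToroidalAux

namespace ToroidalAux
variable {n : ℕ}

lemma latt_zero : latt (0 : Fin n → ℤ) = 0 := by funext i; simp [latt]

lemma rpow_lower {a B q : ℝ} (h1 : 1 ≤ a) (h2 : a ≤ B) : min 1 (B ^ q) ≤ a ^ q := by
  rcases le_or_gt 0 q with hq | hq
  · refine le_trans (min_le_left _ _) ?_
    calc (1:ℝ) = 1 ^ q := (Real.one_rpow q).symm
      _ ≤ a ^ q := Real.rpow_le_rpow zero_le_one h1 hq
  · exact le_trans (min_le_right _ _)
      (Real.rpow_le_rpow_of_nonpos (lt_of_lt_of_le one_pos h1) h2 hq.le)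

lemma jap_le_B (ℓ : Fin n → ℤ) (k : ℕ) (h : ‖latt ℓ‖ < (k:ℝ) + 1) :
    jap ℓ ≤ Real.sqrt (1 + n * ((k:ℝ)+1)^2) := by
  rw [jap]
  refine Real.sqrt_le_sqrt ?_
  have hsum : ∑ i, ((ℓ i : ℝ))^2 ≤ n * ((k:ℝ)+1)^2 := by
    calc ∑ i, ((ℓ i : ℝ))^2 ≤ ∑ _i : Fin n, ((k:ℝ)+1)^2 := by
          refine Finset.sum_le_sum fun i _ => ?_
          have h0 : |((ℓ i : ℝ))| ≤ ‖latt ℓ‖ := by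
            simpa [latt, Real.norm_eq_abs] using norm_le_pi_norm (latt ℓ) i
          have h1 : |((ℓ i : ℝ))| ≤ (k:ℝ)+1 := by linarith
          calc ((ℓ i : ℝ))^2 = |((ℓ i : ℝ))|^2 := (sq_abs _).symm
            _ ≤ ((k:ℝ)+1)^2 := pow_le_pow_left₀ (abs_nonneg _) h1 2
      _ = n * ((k:ℝ)+1)^2 := by simp [Finset.sum_const, nsmul_eq_mul]
  linarith

end ToroidalAux


/-- The restriction to the lattice of a smooth `m`-homogeneous function on `ℝ^n ∖ {0}`
(set to `0` at `ℓ = 0`) satisfies the toroidal symbol estimates of order `Re m`. -/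
theorem homogeneous_restriction_is_toroidal_symbol (n : ℕ) (hn : 1 ≤ n) (m : ℂ)
    (f : (Fin n → ℝ) → ℂ)
    (hf : ContDiffOn ℝ (⊤ : ℕ∞) f {ξ : Fin n → ℝ | ξ ≠ 0})
    (hfh : ∀ t : ℝ, 0 < t → ∀ ξ : Fin n → ℝ, ξ ≠ 0 → f (t • ξ) = (t : ℂ) ^ m * f ξ) :
    ∀ α : Fin n → ℕ, ∃ C > 0, ∀ ℓ : Fin n → ℤ,
      ‖DeltaPow α (fun ℓ' : Fin n → ℤ => if ℓ' = 0 then 0 else f (latt ℓ')) ℓ‖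
        ≤ C * jap ℓ ^ (m.re - ∑ j, (α j : ℝ)) := by
  intro α
  set σ : (Fin n → ℤ) → ℂ := fun ℓ' => if ℓ' = 0 then 0 else f (latt ℓ') with hσdef
  set k : ℕ := ∑ j, α j with hk
  have hexpsum : (∑ j, (α j : ℝ)) = (k : ℝ) := by rw [hk]; push_cast; rfl
  set q : ℝ := m.re - k with hq
  obtain ⟨C₁, hC₁, hb₁⟩ := ToroidalAux.main_estimate (ToroidalAux.Lof α) m f hf hfh
  have hL : (ToroidalAux.Lof α).length = k := ToroidalAux.Lof_length α
  set c : ℝ := Real.sqrt (1 + n) with hc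
  have hc1 : (1:ℝ) ≤ c := by
    rw [hc]
    nlinarith [Real.sq_sqrt (show (0:ℝ) ≤ 1 + n by positivity),
      Real.sqrt_nonneg (1 + (n:ℝ)), Nat.cast_nonneg (α := ℝ) n]
  set B : ℝ := Real.sqrt (1 + n * ((k:ℝ)+1)^2) with hB
  have hBpos : 0 < B := by
    rw [hB]; refine Real.sqrt_pos.mpr ?_; positivity
  set m₀ : ℝ := min 1 (B ^ q) with hm₀
  have hm₀pos : 0 < m₀ := lt_min one_pos (Real.rpow_pos_of_pos hBpos q)
  set S : Finset (Fin n → ℤ) := Fintype.piFinset fun _ => Finset.Icc (-(k+1) : ℤ) (k+1)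
    with hS
  obtain ⟨M, hM⟩ := Finset.exists_le (S.image fun ℓ => ‖DeltaPow α σ ℓ‖)
  have hMmem : ∀ ℓ : Fin n → ℤ, ‖latt ℓ‖ < (k:ℝ)+1 → ‖DeltaPow α σ ℓ‖ ≤ M := by
    intro ℓ hℓ
    refine hM _ (Finset.mem_image_of_mem _ ?_)
    rw [hS, Fintype.mem_piFinset]
    intro i
    rw [Finset.mem_Icc, ← abs_le]
    have h1 : |(ℓ i : ℝ)| ≤ ‖latt ℓ‖ := by
      simpa [latt, Real.norm_eq_abs] using norm_le_pi_norm (latt ℓ) i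
    have h2 : ((|ℓ i| : ℤ) : ℝ) ≤ (((k:ℤ)+1 : ℤ) : ℝ) := by
      push_cast [Int.cast_abs]
      linarith
    exact_mod_cast h2
  set Cfar : ℝ := C₁ * c ^ |q| with hCfar
  set Cnear : ℝ := (max M 1) / m₀ with hCnear
  have hCfarpos : 0 < Cfar := by
    rw [hCfar]; positivity
  have hCnearpos : 0 < Cnear := by
    rw [hCnear]
    exact div_pos (lt_of_lt_of_le one_pos (le_max_right _ _)) hm₀pos
  refine ⟨max Cfar Cnear, lt_of_lt_of_le hCfarpos (le_max_left _ _), fun ℓ => ?_⟩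
  rw [hexpsum]
  have hjap1 : 1 ≤ jap ℓ := ToroidalAux.one_le_jap ℓ
  have hjappos : 0 < jap ℓ := ToroidalAux.jap_pos ℓ
  have hjq : 0 < jap ℓ ^ q := Real.rpow_pos_of_pos hjappos q
  rcases lt_or_ge ‖latt ℓ‖ ((k:ℝ)+1) with hcase | hcase
  · -- near case
    have h1 := hMmem ℓ hcase
    have h2 : jap ℓ ≤ B := ToroidalAux.jap_le_B ℓ k hcase
    have h3 : m₀ ≤ jap ℓ ^ q := ToroidalAux.rpow_lower hjap1 h2
    calc ‖DeltaPow α σ ℓ‖ ≤ M := h1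
      _ ≤ max M 1 := le_max_left _ _
      _ = Cnear * m₀ := by rw [hCnear]; field_simp
      _ ≤ Cnear * jap ℓ ^ q := mul_le_mul_of_nonneg_left h3 hCnearpos.le
      _ ≤ max Cfar Cnear * jap ℓ ^ q :=
          mul_le_mul_of_nonneg_right (le_max_right _ _) hjq.le
  · -- far case
    have hl1 : (1:ℝ) ≤ ‖latt ℓ‖ := by
      have : (0:ℝ) ≤ k := Nat.cast_nonneg _
      linarith
    have hlpos : (0:ℝ) < ‖latt ℓ‖ := lt_of_lt_of_le one_pos hl1
    have hbridge : DeltaPow α σ ℓ = ToroidalAux.TdiffL (ToroidalAux.Lof α) f (latt ℓ) := by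
      rw [ToroidalAux.deltaPow_eq_zdiffL]
      refine ToroidalAux.zdiffL_eq _ 1 σ f (fun ℓ' hℓ' => ?_) ℓ ?_
      · have hne : ℓ' ≠ 0 := by
          intro h0
          rw [h0, ToroidalAux.latt_zero] at hℓ'
          simp at hℓ'
          linarith
        simp only [hσdef, if_neg hne]
      · rw [hL]; linarith
    have hest := hb₁ (latt ℓ) (by rw [hL]; linarith)
    rw [hL] at hest
    have hcmp : ‖latt ℓ‖ ^ q ≤ c ^ |q| * jap ℓ ^ q := by
      refine ToroidalAux.rpow_comp hlpos hjappos hc1 ?_ ?_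
      · calc ‖latt ℓ‖ ≤ jap ℓ := ToroidalAux.norm_latt_le_jap ℓ
          _ ≤ c * jap ℓ := by nlinarith
      · exact ToroidalAux.jap_le_sqrt_mul ℓ hl1
    calc ‖DeltaPow α σ ℓ‖ = ‖ToroidalAux.TdiffL (ToroidalAux.Lof α) f (latt ℓ)‖ := by
          rw [hbridge]
      _ ≤ C₁ * ‖latt ℓ‖ ^ q := hest
      _ ≤ C₁ * (c ^ |q| * jap ℓ ^ q) := mul_le_mul_of_nonneg_left hcmp hC₁.le
      _ = Cfar * jap ℓ ^ q := by rw [hCfar]; ring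
      _ ≤ max Cfar Cnear * jap ℓ ^ q :=
          mul_le_mul_of_nonneg_right (le_max_left _ _) hjq.le
end
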